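/- arXiv:1606.01680 — 5 statements merged into one kernel-verified Lean document; each statement's English description precedes it below -/
import Mathlib

section
/- Let k ≥ 2 and ℓ ≥ 1 be integers, let d = (k−1)·ℓ, and fix 0 < ε < 1/d. For i ∈ {1, …, ℓ} let M_i be the d × d diagonal matrix whose j-th diagonal entry equals 1 if (k−1)(i−1)+1 ≤ j ≤ (k−1)i and equals ε otherwise. Then for every nonzero d × d real matrix A there exists i ∈ {1, …, ℓ} such that the largest eigenvalue of AᵀM_iA is strictly greater than (1/k)·Tr(AᵀM_iA). -/
/-!
Let `j` be a row of `A` of largest squared norm `r`, and `i` the block containing `j`.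
Testing the quadratic form of `AᵀMᵢA` on that row gives `λ₁(AᵀMᵢA) ≥ r`, while every row
contributes at most `r` to the trace, so `Tr(AᵀMᵢA) ≤ (k - 1 + ε d) r < k r`.
-/

open Matrix

/-- The eigenvalues of a Hermitian (real symmetric) matrix, listed in decreasing order:
index `i` gives the `(i+1)`-th largest eigenvalue. For non-Hermitian matrices we return `0`. -/
noncomputable def sortedEigs {d : ℕ} (M : Matrix (Fin d) (Fin d) ℝ) : Fin d → ℝ :=
  if h : M.IsHermitian then
    fun i => (h.eigenvalues ∘ Tuple.sort h.eigenvalues) i.rev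
  else fun _ => 0

open Finset

namespace Matrix.IsHermitian

variable {n : Type*} [Fintype n] [DecidableEq n] {N : Matrix n n ℝ}

theorem posSemidef_smul_one_sub (hN : N.IsHermitian) {c : ℝ}
    (hc : ∀ i, hN.eigenvalues i ≤ c) : (c • 1 - N).PosSemidef := by
  set U : Matrix n n ℝ := (hN.eigenvectorUnitary : Matrix n n ℝ)
  have hU : U * star U = 1 := mem_unitaryGroup_iff.mp hN.eigenvectorUnitary.2
  have hN' : N = U * diagonal hN.eigenvalues * star U := by
    conv_lhs => rw [hN.spectral_theorem, Unitary.conjStarAlgAut_apply]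
    simp [U]
  have h : c • 1 - N = U * diagonal (fun i => c - hN.eigenvalues i) * Uᴴ := by
    rw [← star_eq_conjTranspose, ← diagonal_sub, ← smul_one_eq_diagonal, Matrix.mul_sub,
      Matrix.sub_mul, Matrix.mul_smul, Matrix.smul_mul, Matrix.mul_one, hU, ← hN']
  rw [h]
  exact (PosSemidef.diagonal fun i => sub_nonneg.mpr (hc i)).mul_mul_conjTranspose_same U

theorem dotProduct_mulVec_le (hN : N.IsHermitian) {c : ℝ}
    (hc : ∀ i, hN.eigenvalues i ≤ c) (x : n → ℝ) : x ⬝ᵥ (N *ᵥ x) ≤ c * (x ⬝ᵥ x) := by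
  have := (hN.posSemidef_smul_one_sub hc).dotProduct_mulVec_nonneg x
  simp only [star_trivial, sub_mulVec, smul_mulVec, one_mulVec, dotProduct_sub,
    dotProduct_smul, smul_eq_mul] at this
  linarith

end Matrix.IsHermitian

theorem eigenvalues_le_sortedEigs_zero {d : ℕ} (hd : 0 < d) {N : Matrix (Fin d) (Fin d) ℝ}
    (hN : N.IsHermitian) (i : Fin d) : hN.eigenvalues i ≤ sortedEigs N ⟨0, hd⟩ := by
  set σ := Tuple.sort hN.eigenvalues
  have hmono : Monotone (hN.eigenvalues ∘ σ) := Tuple.monotone_sort hN.eigenvalues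
  rw [sortedEigs, dif_pos hN, show hN.eigenvalues i = (hN.eigenvalues ∘ σ) (σ.symm i) by simp]
  exact hmono (Fin.le_iff_val_le_val.mpr (by simp; omega))

theorem dotProduct_mulVec_transpose_mul_diagonal_mul {m n : Type*} [Fintype m] [Fintype n]
    [DecidableEq m] (A : Matrix m n ℝ) (w : m → ℝ) (x : n → ℝ) :
    x ⬝ᵥ ((Aᵀ * diagonal w * A) *ᵥ x) = ∑ j, w j * (A *ᵥ x) j ^ 2 := by
  rw [← mulVec_mulVec, ← mulVec_mulVec, dotProduct_mulVec, vecMul_transpose]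
  simp only [dotProduct, mulVec_diagonal]
  exact Finset.sum_congr rfl fun j _ => by ring

theorem trace_transpose_mul_diagonal_mul {m n : Type*} [Fintype m] [Fintype n]
    [DecidableEq m] (A : Matrix m n ℝ) (w : m → ℝ) :
    (Aᵀ * diagonal w * A).trace = ∑ j, w j * (A j ⬝ᵥ A j) := by
  rw [Matrix.mul_assoc, trace_mul_comm, Matrix.mul_assoc]
  refine Finset.sum_congr rfl fun j _ => ?_
  rw [Matrix.diag_apply, diagonal_mul]
  rfl

theorem dotProduct_self_row_le_sortedEigs_zero {d : ℕ} (hd : 0 < d)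
    (A : Matrix (Fin d) (Fin d) ℝ) {w : Fin d → ℝ} (hw : 0 ≤ w) {j : Fin d} (hj : w j = 1) :
    A j ⬝ᵥ A j ≤ sortedEigs (Aᵀ * diagonal w * A) ⟨0, hd⟩ := by
  have hpsd : (Aᵀ * diagonal w * A).PosSemidef := by
    simpa [conjTranspose_eq_transpose_of_trivial] using
      (PosSemidef.diagonal hw).conjTranspose_mul_mul_same A
  set μ := sortedEigs (Aᵀ * diagonal w * A) ⟨0, hd⟩
  have hμ : 0 ≤ μ :=
    (hpsd.eigenvalues_nonneg ⟨0, hd⟩).trans (eigenvalues_le_sortedEigs_zero hd hpsd.1 _)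
  have hquad : (A j ⬝ᵥ A j) ^ 2 ≤ A j ⬝ᵥ ((Aᵀ * diagonal w * A) *ᵥ A j) := by
    rw [dotProduct_mulVec_transpose_mul_diagonal_mul]
    refine le_of_eq_of_le ?_ (Finset.single_le_sum (fun l _ => ?_) (Finset.mem_univ j))
    · simp [hj, mulVec]
    · exact mul_nonneg (hw l) (sq_nonneg _)
  have hrayleigh := hpsd.1.dotProduct_mulVec_le (eigenvalues_le_sortedEigs_zero hd hpsd.1) (A j)
  nlinarith [(Finset.sum_nonneg fun l _ => mul_self_nonneg (A j l) : 0 ≤ A j ⬝ᵥ A j)]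

theorem exists_max_row_dotProduct_self_pos {m n : Type*} [Fintype m] [Fintype n]
    [Nonempty m] {A : Matrix m n ℝ} (hA : A ≠ 0) :
    ∃ j, 0 < A j ⬝ᵥ A j ∧ ∀ l, A l ⬝ᵥ A l ≤ A j ⬝ᵥ A j := by
  obtain ⟨j, -, hj⟩ := Finset.exists_max_image univ (fun j => A j ⬝ᵥ A j) univ_nonempty
  obtain ⟨j', hj'⟩ : ∃ j', A j' ≠ 0 := by
    by_contra! h
    exact hA (funext h)
  have hnonneg : 0 ≤ A j' ⬝ᵥ A j' := Finset.sum_nonneg fun l _ => mul_self_nonneg (A j' l)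
  refine ⟨j, ?_, fun l => hj l (mem_univ l)⟩
  exact (hnonneg.lt_of_ne (Ne.symm (dotProduct_self_eq_zero.not.mpr hj'))).trans_le
    (hj j' (mem_univ _))

theorem trace_transpose_mul_diagonal_mul_le {m n : Type*} [Fintype m] [Fintype n]
    [DecidableEq m] (A : Matrix m n ℝ) {w : m → ℝ} (hw : 0 ≤ w) {R : ℝ}
    (hA : ∀ l, A l ⬝ᵥ A l ≤ R) :
    (Aᵀ * diagonal w * A).trace ≤ (∑ l, w l) * R :=
  calc (Aᵀ * diagonal w * A).trace = ∑ l, w l * (A l ⬝ᵥ A l) :=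
        trace_transpose_mul_diagonal_mul A w
    _ ≤ ∑ l, w l * R := sum_le_sum fun l _ => mul_le_mul_of_nonneg_left (hA l) (hw l)
    _ = (∑ l, w l) * R := (sum_mul _ _ _).symm

theorem Fin.card_filter_val_mem_Ico_le {d : ℕ} (a b : ℕ) :
    #{j : Fin d | a ≤ j.val ∧ j.val < b} ≤ b - a :=
  calc #{j : Fin d | a ≤ j.val ∧ j.val < b}
      ≤ #(Finset.Ico a b) :=
        Finset.card_le_card_of_injOn Fin.val (fun j hj => by simpa using hj)
          Fin.val_injective.injOn
    _ = b - a := Nat.card_Ico a b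

theorem Finset.sum_ite_one_le {ι : Type*} [Fintype ι] (p : ι → Prop) [DecidablePred p]
    {ε : ℝ} (hε : 0 ≤ ε) :
    ∑ j, (if p j then (1 : ℝ) else ε) ≤ #{j | p j} + ε * Fintype.card ι := by
  rw [Finset.sum_ite, Finset.sum_const, Finset.sum_const, nsmul_one, nsmul_eq_mul, mul_comm]
  gcongr
  exact_mod_cast Finset.card_filter_le _ _

theorem Fin.sum_ite_val_mem_Ico_le {d : ℕ} (a b : ℕ) {ε : ℝ} (hε : 0 ≤ ε) :
    ∑ j : Fin d, (if a ≤ j.val ∧ j.val < b then (1 : ℝ) else ε) ≤ (b - a : ℕ) + ε * d := by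
  refine (Finset.sum_ite_one_le _ hε).trans ?_
  rw [Fintype.card_fin]
  gcongr
  exact_mod_cast Fin.card_filter_val_mem_Ico_le a b

/-- sharpness of the balancing bound. With `d = (k−1)·ℓ`, `0 < ε < 1/d`, and
`M_i` the diagonal matrix having `1` in the `i`-th block of `k−1` consecutive diagonal positions
and `ε` elsewhere, for every nonzero matrix `A` some `i` satisfies
`λ₁(AᵀM_iA) > (1/k)·Tr(AᵀM_iA)`. (Indices are `0`-based: the `1`-entries of `M_i` sit in
positions `(k−1)·i ≤ j < (k−1)·(i+1)`.) -/
theorem stmt1 (k ℓ : ℕ) (hk : 2 ≤ k) (hℓ : 1 ≤ ℓ) (d : ℕ) (hd : d = (k - 1) * ℓ)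
    (ε : ℝ) (hε0 : 0 < ε) (hε1 : ε < 1 / (d : ℝ))
    (M : Fin ℓ → Matrix (Fin d) (Fin d) ℝ)
    (hM : ∀ i : Fin ℓ, M i = Matrix.diagonal (fun j : Fin d =>
      if (k - 1) * i.val ≤ j.val ∧ j.val < (k - 1) * (i.val + 1) then (1 : ℝ) else ε)) :
    ∀ A : Matrix (Fin d) (Fin d) ℝ, A ≠ 0 → ∃ i : Fin ℓ,
      (1 / (k : ℝ)) * Matrix.trace (Aᵀ * M i * A)
        < sortedEigs (Aᵀ * M i * A)
            ⟨0, by subst hd; exact Nat.mul_pos (by omega) hℓ⟩ := by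
  intro A hA
  set κ := k - 1 with hκ
  have hκ0 : 0 < κ := by omega
  have hd0 : 0 < d := hd ▸ Nat.mul_pos hκ0 hℓ
  have : Nonempty (Fin d) := ⟨⟨0, hd0⟩⟩
  obtain ⟨j, hj_pos, hj_max⟩ := exists_max_row_dotProduct_self_pos hA
  set i : Fin ℓ := ⟨j / κ, Nat.div_lt_of_lt_mul (hd ▸ j.isLt)⟩
  have hj_block : κ * i.val ≤ j.val ∧ j.val < κ * (i.val + 1) :=
    ⟨Nat.mul_div_le _ _, Nat.lt_mul_div_succ _ hκ0⟩
  refine ⟨i, ?_⟩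
  rw [hM i]
  set w : Fin d → ℝ := fun l => if κ * i.val ≤ l.val ∧ l.val < κ * (i.val + 1) then 1 else ε
  have hw : 0 ≤ w := fun l => by dsimp only [w]; split_ifs <;> positivity
  have hmass : ∑ l, w l ≤ κ + ε * d := by
    have := Fin.sum_ite_val_mem_Ico_le (d := d) (κ * i.val) (κ * (i.val + 1)) hε0.le
    rwa [Nat.mul_succ, Nat.add_sub_cancel_left] at this
  have hεd : ε * d < 1 := (lt_div_iff₀ (by exact_mod_cast hd0)).mp hε1
  have hk' : (k : ℝ) = κ + 1 := by rw [hκ, Nat.cast_sub (by omega)]; push_cast; ring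
  rw [one_div, inv_mul_lt_iff₀ (by positivity)]
  calc _ ≤ (∑ l, w l) * (A j ⬝ᵥ A j) :=
        trace_transpose_mul_diagonal_mul_le A hw hj_max
    _ ≤ (κ + ε * d) * (A j ⬝ᵥ A j) := by gcongr
    _ < (κ + 1) * (A j ⬝ᵥ A j) := by gcongr
    _ ≤ k * sortedEigs _ _ := by
      rw [hk']
      gcongr
      exact dotProduct_self_row_le_sortedEigs_zero hd0 A hw (if_pos hj_block)
end

section
/- Let R > 1, let A ∈ 𝒟_R be a symmetric positive-definite d × d matrix with eigenvalues λ₁(A) ≥ … ≥ λ_d(A) and corresponding eigenspaces E_j, and let 𝒥 = { j ∈ {1,…,d−1} : λ_j(A) = R·λ_{j+1}(A) }. Suppose η ∈ ℝᵈ satisfies |P_{E_j}η|² < (1/2)|P_{E_{j+1}}η|² for every j ∈ 𝒥. Then there exists ε₀ > 0 such that A_η(ε)/s₁(A_η(ε)) ∈ 𝒟_R for every ε ∈ (0, ε₀), where A_η(ε) = A(Id + ε η⊗η). -/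
/-!
The singular values of `A (1 + ε η ηᵀ)` are the square roots of the eigenvalues of the rank-one
perturbation `A² + t ζ ζᵀ` of `A²`, where `ζ = A η` and `t = 2ε + ε² |η|²`; so it suffices to show
`λ_j ≤ R² λ_{j+1}` for these eigenvalues when `t > 0` is small. Where `λ_j(A) < R λ_{j+1}(A)`
this follows from the Weyl bounds `λ_i(A²) ≤ λ_i(A² + t ζ ζᵀ) ≤ λ_i(A²) + t |ζ|²`.
Where `λ_j(A) = R λ_{j+1}(A)`, Courant–Fischer with explicit test spaces gives, for small `t` and
unit eigenvectors `f ∈ E_j` and `e ∈ E_{j+1}`, `λ_j ≤ λ_j(A)² + 2t (ζ ⬝ f)²` and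
`λ_{j+1} ≥ λ_{j+1}(A)² + δ t` for every `δ < (ζ ⬝ e)²`. The hypothesis
`|P_{E_j} η|² < ½ |P_{E_{j+1}} η|²` is what makes `2 (ζ ⬝ f)² < R² (ζ ⬝ e)²`.
-/

open Matrix

/-- The singular values of a real square matrix, in decreasing order. -/
noncomputable def sval {d : ℕ} (A : Matrix (Fin d) (Fin d) ℝ) : Fin d → ℝ :=
  fun i => Real.sqrt (sortedEigs (Aᵀ * A) i)

/-- The set `𝒟_R` of invertible matrices with `s₁(A) = 1` and `s_j(A) ≤ R·s_{j+1}(A)`. -/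
def DR (d : ℕ) (hd : 1 ≤ d) (R : ℝ) : Set (Matrix (Fin d) (Fin d) ℝ) :=
  {A | IsUnit A ∧ sval A ⟨0, hd⟩ = 1 ∧
    ∀ (j : Fin d) (h : j.val + 1 < d), sval A j ≤ R * sval A ⟨j.val + 1, h⟩}

open Filter Topology Module Submodule

section DotProduct

variable {d : ℕ}

lemma Matrix.dotProduct_self_pos {x : Fin d → ℝ} (hx : x ≠ 0) : 0 < x ⬝ᵥ x := by
  simpa using dotProduct_star_self_pos_iff.2 hx

lemma Matrix.dotProduct_self_nonneg (x : Fin d → ℝ) : 0 ≤ x ⬝ᵥ x := by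
  simpa using dotProduct_star_self_nonneg x

lemma Matrix.sq_dotProduct_le (u x : Fin d → ℝ) : (u ⬝ᵥ x) ^ 2 ≤ (u ⬝ᵥ u) * (x ⬝ᵥ x) := by
  simpa [dotProduct, sq] using Finset.sum_mul_sq_le_sq_mul_sq Finset.univ u x

lemma Matrix.IsHermitian.mulVec_dotProduct {H : Matrix (Fin d) (Fin d) ℝ}
    (hH : H.IsHermitian) (x y : Fin d → ℝ) : (H *ᵥ x) ⬝ᵥ y = x ⬝ᵥ (H *ᵥ y) := by
  have hT : Hᵀ = H := by simpa using hH.eq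
  rw [dotProduct_mulVec, ← mulVec_transpose, hT, dotProduct_comm]

lemma Matrix.IsHermitian.dotProduct_eq_zero_of_eigenvalues_ne
    {H : Matrix (Fin d) (Fin d) ℝ} (hH : H.IsHermitian) {x y : Fin d → ℝ} {a b : ℝ}
    (hx : H *ᵥ x = a • x) (hy : H *ᵥ y = b • y) (hab : a ≠ b) : x ⬝ᵥ y = 0 := by
  have h := hH.mulVec_dotProduct x y
  rw [hx, hy, smul_dotProduct, dotProduct_smul, smul_eq_mul, smul_eq_mul] at h
  have h' : (a - b) * (x ⬝ᵥ y) = 0 := by linear_combination h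
  exact (mul_eq_zero.1 h').resolve_left (sub_ne_zero.2 hab)

end DotProduct

lemma exists_mem_inf_ne_zero_of_finrank_lt_add {K V : Type*} [Field K] [AddCommGroup V]
    [Module K V] [FiniteDimensional K V] {S W : Submodule K V}
    (h : finrank K V < finrank K S + finrank K W) :
    ∃ x ∈ S ⊓ W, x ≠ 0 := by
  have hsum := Submodule.finrank_sup_add_finrank_inf_eq S W
  have hsup := Submodule.finrank_le (S ⊔ W)
  refine Submodule.exists_mem_ne_zero_of_ne_bot fun hbot => ?_
  rw [hbot, finrank_bot] at hsum
  omega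

section DotOrthonormal

variable {d : ℕ} {ι : Type*}

-- `Fin d → ℝ` carries the sup norm and no inner product, so orthonormality is stated with `⬝ᵥ`.
def DotOrthonormal (v : ι → Fin d → ℝ) : Prop :=
  (∀ i, v i ⬝ᵥ v i = 1) ∧ Pairwise fun i k => v i ⬝ᵥ v k = 0

namespace DotOrthonormal

variable {v : ι → Fin d → ℝ} {M : Matrix (Fin d) (Fin d) ℝ} {e : ι → ℝ}

lemma comp (hv : DotOrthonormal v) {κ : Type*} {g : κ → ι} (hg : Function.Injective g) :
    DotOrthonormal (v ∘ g) :=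
  ⟨fun i => hv.1 (g i), fun _ _ hik => hv.2 (hg.ne hik)⟩

section Fintype

variable [Fintype ι]

lemma sum_smul_dotProduct (hv : DotOrthonormal v) (c : ι → ℝ) (i : ι) :
    (∑ k, c k • v k) ⬝ᵥ v i = c i := by
  classical
  rw [sum_dotProduct, Finset.sum_eq_single i (fun k _ hki => by rw [smul_dotProduct, hv.2 hki,
    smul_zero]) (by simp), smul_dotProduct, hv.1, smul_eq_mul, mul_one]

lemma sum_smul_dotProduct_sum_smul (hv : DotOrthonormal v) (c b : ι → ℝ) :
    (∑ i, c i • v i) ⬝ᵥ (∑ i, b i • v i) = ∑ i, c i * b i := by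
  simp only [dotProduct_sum, dotProduct_smul, hv.sum_smul_dotProduct, smul_eq_mul, mul_comm]

lemma linearIndependent (hv : DotOrthonormal v) : LinearIndependent ℝ v :=
  Fintype.linearIndependent_iff.2 fun c hc i => by
    simpa [hc] using (hv.sum_smul_dotProduct c i).symm

lemma finrank_span (hv : DotOrthonormal v) :
    finrank ℝ (span ℝ (Set.range v)) = Fintype.card ι :=
  finrank_span_eq_card hv.linearIndependent

lemma sum_smul_dotProduct_mulVec (hv : DotOrthonormal v) (hvM : ∀ i, M *ᵥ v i = e i • v i)
    (c : ι → ℝ) : (∑ i, c i • v i) ⬝ᵥ (M *ᵥ ∑ i, c i • v i) = ∑ i, e i * c i ^ 2 := by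
  simp only [mulVec_sum, mulVec_smul, hvM, smul_smul]
  rw [hv.sum_smul_dotProduct_sum_smul]
  exact Finset.sum_congr rfl fun i _ => by ring

lemma dotProduct_mulVec_le (hv : DotOrthonormal v) (hvM : ∀ i, M *ᵥ v i = e i • v i) {b : ℝ}
    (he : ∀ i, e i ≤ b) {x : Fin d → ℝ} (hx : x ∈ span ℝ (Set.range v)) :
    x ⬝ᵥ (M *ᵥ x) ≤ b * (x ⬝ᵥ x) := by
  obtain ⟨c, rfl⟩ := (mem_span_range_iff_exists_fun ℝ).1 hx
  rw [hv.sum_smul_dotProduct_mulVec hvM, hv.sum_smul_dotProduct_sum_smul, Finset.mul_sum]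
  exact Finset.sum_le_sum fun i _ => by nlinarith [he i, sq_nonneg (c i)]

lemma le_dotProduct_mulVec (hv : DotOrthonormal v) (hvM : ∀ i, M *ᵥ v i = e i • v i) {b : ℝ}
    (he : ∀ i, b ≤ e i) {x : Fin d → ℝ} (hx : x ∈ span ℝ (Set.range v)) :
    b * (x ⬝ᵥ x) ≤ x ⬝ᵥ (M *ᵥ x) := by
  obtain ⟨c, rfl⟩ := (mem_span_range_iff_exists_fun ℝ).1 hx
  rw [hv.sum_smul_dotProduct_mulVec hvM, hv.sum_smul_dotProduct_sum_smul, Finset.mul_sum]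
  exact Finset.sum_le_sum fun i _ => by nlinarith [he i, sq_nonneg (c i)]

end Fintype

lemma finrank_span_image (hv : DotOrthonormal v) (s : Finset ι) :
    finrank ℝ (span ℝ (v '' s)) = s.card := by
  rw [Set.image_eq_range]
  exact (hv.comp Subtype.val_injective).finrank_span.trans (by simp)

lemma dotProduct_mulVec_le_of_mem_span_image (hv : DotOrthonormal v)
    (hvM : ∀ i, M *ᵥ v i = e i • v i) {s : Finset ι} {b : ℝ} (he : ∀ i ∈ s, e i ≤ b)
    {x : Fin d → ℝ} (hx : x ∈ span ℝ (v '' s)) : x ⬝ᵥ (M *ᵥ x) ≤ b * (x ⬝ᵥ x) := by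
  rw [Set.image_eq_range] at hx
  exact (hv.comp Subtype.val_injective).dotProduct_mulVec_le (fun i => hvM i)
    (fun i => he i i.2) hx

lemma le_dotProduct_mulVec_of_mem_span_image (hv : DotOrthonormal v)
    (hvM : ∀ i, M *ᵥ v i = e i • v i) {s : Finset ι} {b : ℝ} (he : ∀ i ∈ s, b ≤ e i)
    {x : Fin d → ℝ} (hx : x ∈ span ℝ (v '' s)) : b * (x ⬝ᵥ x) ≤ x ⬝ᵥ (M *ᵥ x) := by
  rw [Set.image_eq_range] at hx
  exact (hv.comp Subtype.val_injective).le_dotProduct_mulVec (fun i => hvM i)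
    (fun i => he i i.2) hx

end DotOrthonormal

end DotOrthonormal

section SortedEigs

variable {d : ℕ} {M : Matrix (Fin d) (Fin d) ℝ}

noncomputable def sortedEigvec (hM : M.IsHermitian) (i : Fin d) : Fin d → ℝ :=
  hM.eigenvectorBasis (Tuple.sort hM.eigenvalues i.rev)

lemma sortedEigs_of_isHermitian (hM : M.IsHermitian) (i : Fin d) :
    sortedEigs M i = hM.eigenvalues (Tuple.sort hM.eigenvalues i.rev) := by
  rw [sortedEigs, dif_pos hM]; rfl

lemma sortedEigs_antitone (hM : M.IsHermitian) : Antitone (sortedEigs M) := fun i j hij => by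
  rw [sortedEigs_of_isHermitian hM, sortedEigs_of_isHermitian hM]
  exact Tuple.monotone_sort hM.eigenvalues (Fin.rev_le_rev.2 hij)

lemma mulVec_sortedEigvec (hM : M.IsHermitian) (i : Fin d) :
    M *ᵥ sortedEigvec hM i = sortedEigs M i • sortedEigvec hM i := by
  rw [sortedEigs_of_isHermitian hM]
  exact hM.mulVec_eigenvectorBasis _

lemma dotOrthonormal_sortedEigvec (hM : M.IsHermitian) : DotOrthonormal (sortedEigvec hM) := by
  classical
  have hσ : Function.Injective fun i : Fin d => Tuple.sort hM.eigenvalues i.rev :=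
    (Tuple.sort hM.eigenvalues).injective.comp Fin.rev_injective
  have h i k := (orthonormal_iff_ite.1 (hM.eigenvectorBasis.orthonormal.comp _ hσ)) i k
  simp only [EuclideanSpace.inner_eq_star_dotProduct, Function.comp_apply, star_trivial] at h
  exact ⟨fun i => (h i i).trans (if_pos rfl), fun i k hik => (h k i).trans (if_neg hik.symm)⟩

lemma sortedEigs_le_of_forall_mem (hM : M.IsHermitian) (j : Fin d)
    {W : Submodule ℝ (Fin d → ℝ)} (hW : d ≤ finrank ℝ W + j) {b : ℝ}
    (hb : ∀ x ∈ W, x ⬝ᵥ (M *ᵥ x) ≤ b * (x ⬝ᵥ x)) : sortedEigs M j ≤ b := by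
  have hv := dotOrthonormal_sortedEigvec hM
  obtain ⟨x, ⟨hxS, hxW⟩, hx0⟩ := exists_mem_inf_ne_zero_of_finrank_lt_add
    (S := span ℝ (sortedEigvec hM '' Finset.Iic j)) (W := W)
    (by rw [hv.finrank_span_image, Fin.card_Iic, finrank_fin_fun]; omega)
  have hlow := hv.le_dotProduct_mulVec_of_mem_span_image (mulVec_sortedEigvec hM)
    (fun i hi => sortedEigs_antitone hM (Finset.mem_Iic.1 hi)) hxS
  exact le_of_mul_le_mul_right (hlow.trans (hb x hxW)) (dotProduct_self_pos hx0)

lemma le_sortedEigs_of_forall_mem (hM : M.IsHermitian) (j : Fin d)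
    {W : Submodule ℝ (Fin d → ℝ)} (hW : j < finrank ℝ W) {b : ℝ}
    (hb : ∀ x ∈ W, b * (x ⬝ᵥ x) ≤ x ⬝ᵥ (M *ᵥ x)) : b ≤ sortedEigs M j := by
  have hv := dotOrthonormal_sortedEigvec hM
  obtain ⟨x, ⟨hxS, hxW⟩, hx0⟩ := exists_mem_inf_ne_zero_of_finrank_lt_add
    (S := span ℝ (sortedEigvec hM '' Finset.Ici j)) (W := W)
    (by rw [hv.finrank_span_image, Fin.card_Ici, finrank_fin_fun]; omega)
  have hup := hv.dotProduct_mulVec_le_of_mem_span_image (mulVec_sortedEigvec hM)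
    (fun i hi => sortedEigs_antitone hM (Finset.mem_Ici.1 hi)) hxS
  exact le_of_mul_le_mul_right ((hb x hxW).trans hup) (dotProduct_self_pos hx0)

lemma sortedEigs_eq_of_dotOrthonormal (hM : M.IsHermitian) {v : Fin d → Fin d → ℝ}
    {e : Fin d → ℝ} (hv : DotOrthonormal v) (hvM : ∀ i, M *ᵥ v i = e i • v i)
    (he : Antitone e) : sortedEigs M = e := by
  funext j
  apply le_antisymm
  · refine sortedEigs_le_of_forall_mem hM j (W := span ℝ (v '' Finset.Ici j)) ?_ fun x hx =>
      hv.dotProduct_mulVec_le_of_mem_span_image hvM (fun i hi => he (Finset.mem_Ici.1 hi)) hx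
    rw [hv.finrank_span_image, Fin.card_Ici]; omega
  · refine le_sortedEigs_of_forall_mem hM j (W := span ℝ (v '' Finset.Iic j)) ?_ fun x hx =>
      hv.le_dotProduct_mulVec_of_mem_span_image hvM (fun i hi => he (Finset.mem_Iic.1 hi)) hx
    rw [hv.finrank_span_image, Fin.card_Iic]; omega

lemma sortedEigs_le_add_of_forall_dotProduct_mulVec_le {N : Matrix (Fin d) (Fin d) ℝ}
    (hM : M.IsHermitian) (hN : N.IsHermitian) {c : ℝ}
    (h : ∀ x, x ⬝ᵥ (N *ᵥ x) ≤ x ⬝ᵥ (M *ᵥ x) + c * (x ⬝ᵥ x)) (j : Fin d) :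
    sortedEigs N j ≤ sortedEigs M j + c := by
  have hv := dotOrthonormal_sortedEigvec hM
  refine sortedEigs_le_of_forall_mem hN j (W := span ℝ (sortedEigvec hM '' Finset.Ici j))
    (by rw [hv.finrank_span_image, Fin.card_Ici]; omega) fun x hx => ?_
  have := hv.dotProduct_mulVec_le_of_mem_span_image (mulVec_sortedEigvec hM)
    (fun i hi => sortedEigs_antitone hM (Finset.mem_Ici.1 hi)) hx
  linarith [h x]

end SortedEigs

section SingularValues

variable {d : ℕ}

lemma Matrix.mulVec_dotProduct_mulVec (N : Matrix (Fin d) (Fin d) ℝ) (x y : Fin d → ℝ) :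
    (N *ᵥ x) ⬝ᵥ (N *ᵥ y) = x ⬝ᵥ ((Nᵀ * N) *ᵥ y) := by
  rw [← mulVec_mulVec, dotProduct_mulVec x, vecMul_transpose]

lemma Matrix.isHermitian_transpose_mul_self (N : Matrix (Fin d) (Fin d) ℝ) :
    (Nᵀ * N).IsHermitian := by
  simpa using isHermitian_conjTranspose_mul_self N

lemma Matrix.posDef_transpose_mul_self {N : Matrix (Fin d) (Fin d) ℝ} (hN : IsUnit N) :
    (Nᵀ * N).PosDef := by
  simpa using PosDef.conjTranspose_mul_self N (mulVec_injective_iff_isUnit.2 hN)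

lemma sortedEigs_pos {A : Matrix (Fin d) (Fin d) ℝ} (hA : A.PosDef) (i : Fin d) :
    0 < sortedEigs A i := by
  rw [sortedEigs_of_isHermitian hA.1]
  exact hA.eigenvalues_pos _

lemma sortedEigs_smul {M : Matrix (Fin d) (Fin d) ℝ} (hM : M.IsHermitian) {c : ℝ} (hc : 0 ≤ c) :
    sortedEigs (c • M) = fun i => c * sortedEigs M i :=
  sortedEigs_eq_of_dotOrthonormal (hM.smul (IsSelfAdjoint.all c))
    (dotOrthonormal_sortedEigvec hM)
    (fun i => by rw [smul_mulVec, mulVec_sortedEigvec, smul_smul])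
    (fun _ _ hij => mul_le_mul_of_nonneg_left (sortedEigs_antitone hM hij) hc)

lemma Matrix.IsHermitian.mul_self {A : Matrix (Fin d) (Fin d) ℝ} (hA : A.IsHermitian) :
    (A * A).IsHermitian := by
  rw [IsHermitian, conjTranspose_mul, hA.eq]

lemma mul_self_mulVec_of_mulVec_eq_smul {A : Matrix (Fin d) (Fin d) ℝ} {x : Fin d → ℝ} {a : ℝ}
    (hx : A *ᵥ x = a • x) : (A * A) *ᵥ x = a ^ 2 • x := by
  rw [← mulVec_mulVec, hx, mulVec_smul, hx, smul_smul, sq]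

lemma sortedEigs_mul_self {A : Matrix (Fin d) (Fin d) ℝ} (hA : A.PosDef) (i : Fin d) :
    sortedEigs (A * A) i = sortedEigs A i ^ 2 := by
  refine congrFun (sortedEigs_eq_of_dotOrthonormal hA.1.mul_self (dotOrthonormal_sortedEigvec hA.1)
    (fun k => mul_self_mulVec_of_mulVec_eq_smul (mulVec_sortedEigvec hA.1 k)) fun k l hkl => ?_) i
  exact pow_le_pow_left₀ (sortedEigs_pos hA l).le (sortedEigs_antitone hA.1 hkl) 2

-- `N v / √λ` runs through an orthonormal eigenbasis of `N Nᵀ` as `v` runs through one of `Nᵀ N`.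
lemma sortedEigs_mul_transpose {N : Matrix (Fin d) (Fin d) ℝ} (hN : IsUnit N) :
    sortedEigs (N * Nᵀ) = sortedEigs (Nᵀ * N) := by
  have hB := posDef_transpose_mul_self hN
  set v := sortedEigvec hB.1
  set c := sortedEigs (Nᵀ * N)
  have hc : ∀ i, 0 < c i := sortedEigs_pos hB
  have hv := dotOrthonormal_sortedEigvec hB.1
  have hdot : ∀ i k, (N *ᵥ v i) ⬝ᵥ (N *ᵥ v k) = c k * (v i ⬝ᵥ v k) := fun i k => by
    rw [mulVec_dotProduct_mulVec, mulVec_sortedEigvec, dotProduct_smul, smul_eq_mul]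
  refine sortedEigs_eq_of_dotOrthonormal (by simpa using isHermitian_mul_conjTranspose_self N)
    (v := fun i => (√(c i))⁻¹ • N *ᵥ v i) ⟨fun i => ?_, fun i k hik => ?_⟩ (fun i => ?_)
    (sortedEigs_antitone hB.1)
  · rw [smul_dotProduct, dotProduct_smul, hdot, hv.1, smul_eq_mul, smul_eq_mul, mul_one,
      ← mul_assoc, ← mul_inv, Real.mul_self_sqrt (hc i).le, inv_mul_cancel₀ (hc i).ne']
  · dsimp only
    rw [smul_dotProduct, dotProduct_smul, hdot, hv.2 hik]
    simp
  · rw [mulVec_smul, mulVec_mulVec, Matrix.mul_assoc, ← mulVec_mulVec,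
      mulVec_sortedEigvec, mulVec_smul, smul_comm]

lemma sval_smul (c : ℝ) (N : Matrix (Fin d) (Fin d) ℝ) (i : Fin d) :
    sval (c • N) i = |c| * sval N i := by
  have hcN : (c • N)ᵀ * (c • N) = (c * c) • (Nᵀ * N) := by
    rw [transpose_smul, Matrix.smul_mul, Matrix.mul_smul, smul_smul]
  rw [sval, hcN, sortedEigs_smul (isHermitian_transpose_mul_self N) (mul_self_nonneg c),
    Real.sqrt_mul (mul_self_nonneg c), Real.sqrt_mul_self_eq_abs]
  rfl

lemma sval_pos {N : Matrix (Fin d) (Fin d) ℝ} (hN : IsUnit N) (i : Fin d) : 0 < sval N i :=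
  Real.sqrt_pos.2 (sortedEigs_pos (posDef_transpose_mul_self hN) i)

lemma sval_eq_sqrt_sortedEigs_mul_transpose {N : Matrix (Fin d) (Fin d) ℝ} (hN : IsUnit N)
    (i : Fin d) : sval N i = √(sortedEigs (N * Nᵀ) i) := by
  rw [sortedEigs_mul_transpose hN]
  rfl

lemma sval_eq_sortedEigs {A : Matrix (Fin d) (Fin d) ℝ} (hA : A.PosDef) :
    sval A = sortedEigs A := by
  funext i
  have hAT : Aᵀ = A := by simpa using hA.1.eq
  rw [sval, hAT, sortedEigs_mul_self hA]
  exact Real.sqrt_sq (sortedEigs_pos hA i).le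

lemma inv_sval_smul_mem_DR (hd : 1 ≤ d) {R : ℝ} (hR : 0 ≤ R) {N : Matrix (Fin d) (Fin d) ℝ}
    (hN : IsUnit N) (h : ∀ (j : Fin d) (hj : j.val + 1 < d),
      sortedEigs (N * Nᵀ) j ≤ R ^ 2 * sortedEigs (N * Nᵀ) ⟨j.val + 1, hj⟩) :
    (sval N ⟨0, hd⟩)⁻¹ • N ∈ DR d hd R := by
  have hs := sval_pos hN ⟨0, hd⟩
  have habs : |(sval N ⟨0, hd⟩)⁻¹| = (sval N ⟨0, hd⟩)⁻¹ := abs_of_pos (inv_pos.2 hs)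
  refine ⟨?_, ?_, fun j hj => ?_⟩
  · simpa [Units.smul_mk0] using
      (isUnit_smul_iff (Units.mk0 _ (inv_ne_zero hs.ne')) N).2 hN
  · rw [sval_smul, habs, inv_mul_cancel₀ hs.ne']
  · have hsq : sval N j ≤ R * sval N ⟨j.val + 1, hj⟩ := by
      rw [sval_eq_sqrt_sortedEigs_mul_transpose hN, sval_eq_sqrt_sortedEigs_mul_transpose hN,
        ← Real.sqrt_sq hR, ← Real.sqrt_mul (sq_nonneg R)]
      exact Real.sqrt_le_sqrt (h j hj)
    rw [sval_smul, sval_smul, habs, mul_left_comm]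
    exact mul_le_mul_of_nonneg_left hsq (inv_nonneg.2 hs.le)

end SingularValues

lemma eventually_pos_mul_lt {C g : ℝ} (hg : 0 < g) : ∀ᶠ t in 𝓝[>] (0 : ℝ), 0 < t ∧ t * C < g :=
  (eventually_mem_nhdsWithin (a := 0) (s := Set.Ioi 0)).and <| nhdsWithin_le_nhds <|
    ((continuous_id.mul continuous_const).tendsto' 0 0 (by simp)).eventually (gt_mem_nhds hg)

lemma tendsto_two_mul_add_sq_mul_nhdsGT {q : ℝ} (hq : 0 ≤ q) :
    Tendsto (fun ε : ℝ => 2 * ε + ε ^ 2 * q) (𝓝[>] 0) (𝓝[>] 0) :=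
  tendsto_nhdsWithin_iff.2
    ⟨((by fun_prop : Continuous fun ε : ℝ => 2 * ε + ε ^ 2 * q).tendsto' 0 0 (by simp)).mono_left
      nhdsWithin_le_nhds,
    eventually_mem_nhdsWithin.mono fun ε (hε : 0 < ε) => Set.mem_Ioi.2 (by positivity)⟩

lemma mul_sq_le_sq_add_mul_sq {δ β : ℝ} (h : δ < β ^ 2) (a w : ℝ) :
    δ * a ^ 2 ≤ (a * β + w) ^ 2 + β ^ 2 / (β ^ 2 - δ) * w ^ 2 := by
  have hD : 0 < β ^ 2 - δ := sub_pos.2 h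
  have key : (a * β + w) ^ 2 + β ^ 2 / (β ^ 2 - δ) * w ^ 2 - δ * a ^ 2
      = (((β ^ 2 - δ) * a + β * w) ^ 2 + (β ^ 2 - δ) * w ^ 2) / (β ^ 2 - δ) := by
    field_simp
    ring
  have : 0 ≤ (((β ^ 2 - δ) * a + β * w) ^ 2 + (β ^ 2 - δ) * w ^ 2) / (β ^ 2 - δ) := by positivity
  linarith

section Subspaces

variable {d : ℕ}

lemma dotProduct_eq_zero_of_mem_span {u : Fin d → ℝ} {s : Set (Fin d → ℝ)}
    (hs : ∀ w ∈ s, u ⬝ᵥ w = 0) {r : Fin d → ℝ} (hr : r ∈ span ℝ s) : u ⬝ᵥ r = 0 := by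
  induction hr using Submodule.span_induction with
  | mem w hw => exact hs w hw
  | zero => exact dotProduct_zero u
  | add x y _ _ hx hy => rw [dotProduct_add, hx, hy, add_zero]
  | smul a x _ hx => rw [dotProduct_smul, hx, smul_zero]

lemma finrank_span_singleton_sup {u : Fin d → ℝ} (hu : u ≠ 0) {V : Submodule ℝ (Fin d → ℝ)}
    (huV : ∀ r ∈ V, u ⬝ᵥ r = 0) : finrank ℝ ↥(span ℝ {u} ⊔ V) = finrank ℝ V + 1 := by
  have hinf : span ℝ {u} ⊓ V = ⊥ := by
    refine (Submodule.eq_bot_iff _).2 fun x ⟨hxu, hxV⟩ => ?_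
    obtain ⟨a, rfl⟩ := mem_span_singleton.1 hxu
    have h := huV _ hxV
    rw [dotProduct_smul, smul_eq_mul] at h
    rw [(mul_eq_zero.1 h).resolve_right (dotProduct_self_pos hu).ne', zero_smul]
  have := Submodule.finrank_sup_add_finrank_inf_eq (span ℝ {u}) V
  rw [hinf, finrank_bot, finrank_span_singleton hu] at this
  omega

lemma dotProduct_mulVec_smul_add {H : Matrix (Fin d) (Fin d) ℝ} (hH : H.IsHermitian)
    {u r : Fin d → ℝ} {κ : ℝ} (hu : H *ᵥ u = κ • u) (hur : u ⬝ᵥ r = 0) (a : ℝ) :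
    (a • u + r) ⬝ᵥ (H *ᵥ (a • u + r)) = a ^ 2 * κ * (u ⬝ᵥ u) + r ⬝ᵥ (H *ᵥ r) := by
  have hHur : u ⬝ᵥ (H *ᵥ r) = 0 := by
    rw [← hH.mulVec_dotProduct, hu, smul_dotProduct, hur, smul_zero]
  simp only [mulVec_add, mulVec_smul, hu, add_dotProduct, dotProduct_add, smul_dotProduct,
    dotProduct_smul, hHur, dotProduct_comm r u, hur, smul_eq_mul]
  ring

lemma dotProduct_smul_add_self {u r : Fin d → ℝ} (hu : u ⬝ᵥ u = 1) (hur : u ⬝ᵥ r = 0) (a : ℝ) :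
    (a • u + r) ⬝ᵥ (a • u + r) = a ^ 2 + r ⬝ᵥ r := by
  simp only [add_dotProduct, dotProduct_add, smul_dotProduct, dotProduct_smul, hu,
    dotProduct_comm r u, hur, smul_eq_mul]
  ring

end Subspaces

section RankOnePerturbation

variable {d : ℕ} {H : Matrix (Fin d) (Fin d) ℝ} (ζ : Fin d → ℝ)

lemma Matrix.IsHermitian.add_smul_vecMulVec (hH : H.IsHermitian) (t : ℝ) :
    (H + t • vecMulVec ζ ζ).IsHermitian :=
  hH.add ((by simpa using (posSemidef_vecMulVec_self_star ζ).1 :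
    (vecMulVec ζ ζ).IsHermitian).smul (IsSelfAdjoint.all t))

lemma dotProduct_mulVec_add_smul_vecMulVec (t : ℝ) (x : Fin d → ℝ) :
    x ⬝ᵥ ((H + t • vecMulVec ζ ζ) *ᵥ x) = x ⬝ᵥ (H *ᵥ x) + t * (ζ ⬝ᵥ x) ^ 2 := by
  simp only [add_mulVec, smul_mulVec, vecMulVec_mulVec, op_smul_eq_smul, dotProduct_add,
    dotProduct_smul, smul_eq_mul, dotProduct_comm x ζ]
  ring

variable {ζ}

lemma sortedEigs_le_sortedEigs_add_smul_vecMulVec (hH : H.IsHermitian) {t : ℝ} (ht : 0 ≤ t)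
    (j : Fin d) : sortedEigs H j ≤ sortedEigs (H + t • vecMulVec ζ ζ) j := by
  simpa using sortedEigs_le_add_of_forall_dotProduct_mulVec_le (hH.add_smul_vecMulVec ζ t) hH
    (c := 0) (fun x => by
      rw [dotProduct_mulVec_add_smul_vecMulVec]; nlinarith [sq_nonneg (ζ ⬝ᵥ x)]) j

lemma sortedEigs_add_smul_vecMulVec_le (hH : H.IsHermitian) {t : ℝ} (ht : 0 ≤ t) (j : Fin d) :
    sortedEigs (H + t • vecMulVec ζ ζ) j ≤ sortedEigs H j + t * (ζ ⬝ᵥ ζ) :=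
  sortedEigs_le_add_of_forall_dotProduct_mulVec_le hH (hH.add_smul_vecMulVec ζ t) (fun x => by
    rw [dotProduct_mulVec_add_smul_vecMulVec, mul_assoc]
    gcongr
    exact sq_dotProduct_le ζ x) j

lemma eventually_sortedEigs_add_smul_vecMulVec_le_of_lt (hH : H.IsHermitian) {c : ℝ}
    (hc : 0 ≤ c) {j : Fin d} (hj : j.val + 1 < d)
    (hlt : sortedEigs H j < c * sortedEigs H ⟨j.val + 1, hj⟩) :
    ∀ᶠ t in 𝓝[>] (0 : ℝ), sortedEigs (H + t • vecMulVec ζ ζ) j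
      ≤ c * sortedEigs (H + t • vecMulVec ζ ζ) ⟨j.val + 1, hj⟩ := by
  filter_upwards [eventually_pos_mul_lt (C := ζ ⬝ᵥ ζ) (sub_pos.2 hlt)] with t ⟨ht, htζ⟩
  calc sortedEigs (H + t • vecMulVec ζ ζ) j ≤ sortedEigs H j + t * (ζ ⬝ᵥ ζ) :=
        sortedEigs_add_smul_vecMulVec_le hH ht.le j
    _ ≤ c * sortedEigs H ⟨j.val + 1, hj⟩ := by linarith
    _ ≤ c * sortedEigs (H + t • vecMulVec ζ ζ) ⟨j.val + 1, hj⟩ :=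
        mul_le_mul_of_nonneg_left (sortedEigs_le_sortedEigs_add_smul_vecMulVec hH ht.le _) hc

-- Test space: `f` together with the eigenvectors of the eigenvalues below `λ_j`.
lemma sortedEigs_add_smul_vecMulVec_le_of_eigenvector (hH : H.IsHermitian) {j : Fin d}
    (hj : j.val + 1 < d) (hgap : sortedEigs H ⟨j.val + 1, hj⟩ < sortedEigs H j)
    {f : Fin d → ℝ} (hf1 : f ⬝ᵥ f = 1) (hf : H *ᵥ f = sortedEigs H j • f) {t : ℝ} (ht : 0 ≤ t)
    (htζ : 2 * t * (ζ ⬝ᵥ ζ) ≤ sortedEigs H j - sortedEigs H ⟨j.val + 1, hj⟩) :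
    sortedEigs (H + t • vecMulVec ζ ζ) j ≤ sortedEigs H j + 2 * t * (ζ ⬝ᵥ f) ^ 2 := by
  have hv := dotOrthonormal_sortedEigvec hH
  have hκ : ∀ i ∈ Finset.Ioi j, sortedEigs H i ≤ sortedEigs H ⟨j.val + 1, hj⟩ := fun i hi =>
    sortedEigs_antitone hH (Fin.mk_le_of_le_val (Finset.mem_Ioi.1 hi))
  have hfV : ∀ r ∈ span ℝ (sortedEigvec hH '' Finset.Ioi j), f ⬝ᵥ r = 0 := fun r =>
    dotProduct_eq_zero_of_mem_span <| Set.forall_mem_image.2 fun i hi =>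
      hH.dotProduct_eq_zero_of_eigenvalues_ne hf (mulVec_sortedEigvec hH i)
        (by linarith [hκ i hi])
  refine sortedEigs_le_of_forall_mem (hH.add_smul_vecMulVec ζ t) j
    (W := span ℝ {f} ⊔ span ℝ (sortedEigvec hH '' Finset.Ioi j)) ?_ fun x hx => ?_
  · rw [finrank_span_singleton_sup (by rintro rfl; simp at hf1) hfV, hv.finrank_span_image,
      Fin.card_Ioi]
    omega
  obtain ⟨_, hy, r, hr, rfl⟩ := mem_sup.1 hx
  obtain ⟨a, rfl⟩ := mem_span_singleton.1 hy
  have hrH := hv.dotProduct_mulVec_le_of_mem_span_image (mulVec_sortedEigvec hH) hκ hr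
  have hCS := sq_dotProduct_le ζ r
  have hrr := dotProduct_self_nonneg r
  rw [dotProduct_mulVec_add_smul_vecMulVec, dotProduct_mulVec_smul_add hH hf (hfV r hr),
    dotProduct_smul_add_self hf1 (hfV r hr), dotProduct_add, dotProduct_smul, smul_eq_mul, hf1]
  nlinarith [mul_nonneg ht (sq_nonneg (a * (ζ ⬝ᵥ f) - ζ ⬝ᵥ r)), mul_le_mul_of_nonneg_left hCS ht,
    mul_le_mul_of_nonneg_right htζ hrr, mul_nonneg (mul_nonneg ht (sq_nonneg (ζ ⬝ᵥ f))) hrr]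

-- Test space: `e` together with the eigenvectors of the eigenvalues above `λ_{j+1}`; the cross
-- term `2 a (ζ ⬝ e) (ζ ⬝ r)` is absorbed by the gap `λ_j - λ_{j+1}` via `mul_sq_le_sq_add_mul_sq`.
lemma eventually_add_mul_le_sortedEigs_add_smul_vecMulVec (hH : H.IsHermitian) {j : Fin d}
    (hj : j.val + 1 < d) (hgap : sortedEigs H ⟨j.val + 1, hj⟩ < sortedEigs H j)
    {e : Fin d → ℝ} (he1 : e ⬝ᵥ e = 1) (he : H *ᵥ e = sortedEigs H ⟨j.val + 1, hj⟩ • e)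
    {δ : ℝ} (hδ : δ < (ζ ⬝ᵥ e) ^ 2) :
    ∀ᶠ t in 𝓝[>] (0 : ℝ), sortedEigs H ⟨j.val + 1, hj⟩ + δ * t
      ≤ sortedEigs (H + t • vecMulVec ζ ζ) ⟨j.val + 1, hj⟩ := by
  set C := (ζ ⬝ᵥ e) ^ 2 / ((ζ ⬝ᵥ e) ^ 2 - δ)
  have hC : 0 ≤ C := div_nonneg (sq_nonneg _) (sub_pos.2 hδ).le
  have hv := dotOrthonormal_sortedEigvec hH
  have hκ : ∀ i ∈ Finset.Iic j, sortedEigs H j ≤ sortedEigs H i := fun i hi =>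
    sortedEigs_antitone hH (Finset.mem_Iic.1 hi)
  have heV : ∀ r ∈ span ℝ (sortedEigvec hH '' Finset.Iic j), e ⬝ᵥ r = 0 := fun r =>
    dotProduct_eq_zero_of_mem_span <| Set.forall_mem_image.2 fun i hi =>
      hH.dotProduct_eq_zero_of_eigenvalues_ne he (mulVec_sortedEigvec hH i)
        (by linarith [hκ i hi])
  filter_upwards [eventually_pos_mul_lt (C := δ + C * (ζ ⬝ᵥ ζ)) (sub_pos.2 hgap)]
    with t ⟨ht, htC⟩
  refine le_sortedEigs_of_forall_mem (hH.add_smul_vecMulVec ζ t) _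
    (W := span ℝ {e} ⊔ span ℝ (sortedEigvec hH '' Finset.Iic j)) ?_ fun x hx => ?_
  · rw [finrank_span_singleton_sup (by rintro rfl; simp at he1) heV, hv.finrank_span_image,
      Fin.card_Iic]
    simp
  obtain ⟨_, hy, r, hr, rfl⟩ := mem_sup.1 hx
  obtain ⟨a, rfl⟩ := mem_span_singleton.1 hy
  have hrH := hv.le_dotProduct_mulVec_of_mem_span_image (mulVec_sortedEigvec hH) hκ hr
  have hCS := sq_dotProduct_le ζ r
  have hrr := dotProduct_self_nonneg r
  have hsq := mul_sq_le_sq_add_mul_sq hδ a (ζ ⬝ᵥ r)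
  rw [dotProduct_mulVec_add_smul_vecMulVec, dotProduct_mulVec_smul_add hH he (heV r hr),
    dotProduct_smul_add_self he1 (heV r hr), dotProduct_add, dotProduct_smul, smul_eq_mul, he1]
  nlinarith [mul_le_mul_of_nonneg_left hsq ht.le,
    mul_le_mul_of_nonneg_left hCS (mul_nonneg ht.le hC),
    mul_le_mul_of_nonneg_right htC.le hrr]

lemma eventually_sortedEigs_add_smul_vecMulVec_le_of_eq (hH : H.IsHermitian) {c : ℝ} (hc : 0 < c)
    {j : Fin d} (hj : j.val + 1 < d) (hgap : sortedEigs H ⟨j.val + 1, hj⟩ < sortedEigs H j)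
    (heq : sortedEigs H j = c * sortedEigs H ⟨j.val + 1, hj⟩)
    {f e : Fin d → ℝ} (hf1 : f ⬝ᵥ f = 1) (hf : H *ᵥ f = sortedEigs H j • f)
    (he1 : e ⬝ᵥ e = 1) (he : H *ᵥ e = sortedEigs H ⟨j.val + 1, hj⟩ • e)
    (hfe : 2 * (ζ ⬝ᵥ f) ^ 2 < c * (ζ ⬝ᵥ e) ^ 2) :
    ∀ᶠ t in 𝓝[>] (0 : ℝ), sortedEigs (H + t • vecMulVec ζ ζ) j
      ≤ c * sortedEigs (H + t • vecMulVec ζ ζ) ⟨j.val + 1, hj⟩ := by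
  filter_upwards [eventually_pos_mul_lt (C := 2 * (ζ ⬝ᵥ ζ)) (sub_pos.2 hgap),
    eventually_add_mul_le_sortedEigs_add_smul_vecMulVec hH hj hgap he1 he
      (δ := 2 * (ζ ⬝ᵥ f) ^ 2 / c) ((div_lt_iff₀' hc).2 hfe)] with t ⟨ht, htζ⟩ hlow
  calc sortedEigs (H + t • vecMulVec ζ ζ) j ≤ sortedEigs H j + 2 * t * (ζ ⬝ᵥ f) ^ 2 :=
        sortedEigs_add_smul_vecMulVec_le_of_eigenvector hH hj hgap hf1 hf ht.le (by linarith)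
    _ = c * (sortedEigs H ⟨j.val + 1, hj⟩ + 2 * (ζ ⬝ᵥ f) ^ 2 / c * t) := by
        rw [heq]; field_simp
    _ ≤ c * sortedEigs (H + t • vecMulVec ζ ζ) ⟨j.val + 1, hj⟩ :=
        mul_le_mul_of_nonneg_left hlow hc.le

end RankOnePerturbation

section PositiveDefinite

variable {d : ℕ} {A : Matrix (Fin d) (Fin d) ℝ}

lemma mul_one_add_smul_vecMulVec_mul_transpose (hA : Aᵀ = A) (η : Fin d → ℝ) (ε : ℝ) :
    A * (1 + ε • vecMulVec η η) * (A * (1 + ε • vecMulVec η η))ᵀ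
      = A * A + (2 * ε + ε ^ 2 * (η ⬝ᵥ η)) • vecMulVec (A *ᵥ η) (A *ᵥ η) := by
  have hηA : η ᵥ* A = A *ᵥ η := by rw [← mulVec_transpose, hA]
  rw [transpose_mul, hA, transpose_add, transpose_one, transpose_smul, transpose_vecMulVec]
  simp only [Matrix.mul_add, Matrix.add_mul, Matrix.mul_one, Matrix.one_mul, Matrix.mul_smul,
    Matrix.smul_mul, mul_vecMulVec, vecMulVec_mul, add_mulVec, smul_mulVec, vecMulVec_mulVec,
    op_smul_eq_smul, hηA, add_vecMulVec, smul_vecMulVec]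
  module

lemma isUnit_one_add_smul_vecMulVec (η : Fin d → ℝ) {ε : ℝ} (hε : 0 ≤ ε) :
    IsUnit (1 + ε • vecMulVec η η) :=
  (PosDef.one.add_posSemidef ((by simpa using posSemidef_vecMulVec_self_star η :
    (vecMulVec η η).PosSemidef).smul hε)).isUnit

lemma eventually_sortedEigs_le_of_posDef_of_eq {R : ℝ} (hR : 1 < R) (hA : A.PosDef)
    {η : Fin d → ℝ} {j : Fin d} (hj : j.val + 1 < d)
    (heq : sortedEigs A j = R * sortedEigs A ⟨j.val + 1, hj⟩)
    {f p : Fin d → ℝ} (hf1 : f ⬝ᵥ f = 1) (hf : A *ᵥ f = sortedEigs A j • f)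
    (hp : A *ᵥ p = sortedEigs A ⟨j.val + 1, hj⟩ • p) (hηp : η ⬝ᵥ p = p ⬝ᵥ p)
    (hηf : 2 * (η ⬝ᵥ f) ^ 2 < p ⬝ᵥ p) :
    ∀ᶠ t in 𝓝[>] (0 : ℝ), sortedEigs (A * A + t • vecMulVec (A *ᵥ η) (A *ᵥ η)) j
      ≤ R ^ 2 * sortedEigs (A * A + t • vecMulVec (A *ᵥ η) (A *ᵥ η)) ⟨j.val + 1, hj⟩ := by
  have hpos := sortedEigs_pos hA
  have hp0 : 0 < p ⬝ᵥ p := lt_of_le_of_lt (by positivity) hηf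
  set e := (√(p ⬝ᵥ p))⁻¹ • p
  have he1 : e ⬝ᵥ e = 1 := by
    rw [smul_dotProduct, dotProduct_smul, smul_eq_mul, smul_eq_mul, ← mul_assoc, ← mul_inv,
      Real.mul_self_sqrt hp0.le, inv_mul_cancel₀ hp0.ne']
  have he : A *ᵥ e = sortedEigs A ⟨j.val + 1, hj⟩ • e := by
    rw [mulVec_smul, hp, smul_comm]
  have hζf : (A *ᵥ η) ⬝ᵥ f = sortedEigs A j * (η ⬝ᵥ f) := by
    rw [hA.1.mulVec_dotProduct, hf, dotProduct_smul, smul_eq_mul]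
  have hζe : ((A *ᵥ η) ⬝ᵥ e) ^ 2 = sortedEigs A ⟨j.val + 1, hj⟩ ^ 2 * (p ⬝ᵥ p) := by
    rw [hA.1.mulVec_dotProduct, he, dotProduct_smul, dotProduct_smul, hηp, smul_eq_mul,
      smul_eq_mul, mul_pow, mul_pow, inv_pow, Real.sq_sqrt hp0.le]
    field_simp
  refine eventually_sortedEigs_add_smul_vecMulVec_le_of_eq hA.1.mul_self (by positivity) hj ?_ ?_
    hf1 ?_ he1 ?_ ?_ <;> try simp only [sortedEigs_mul_self hA]
  · exact pow_lt_pow_left₀ (heq ▸ lt_mul_of_one_lt_left (hpos _) hR) (hpos _).le two_ne_zero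
  · rw [heq, mul_pow]
  · exact mul_self_mulVec_of_mulVec_eq_smul hf
  · exact mul_self_mulVec_of_mulVec_eq_smul he
  · have h := mul_lt_mul_of_pos_left hηf (pow_pos (hpos j) 2)
    rw [hζf, hζe]
    rw [heq] at h ⊢
    linarith

lemma eventually_sortedEigs_le_of_posDef {R : ℝ} (hR : 1 < R) (hA : A.PosDef) {η : Fin d → ℝ}
    {j : Fin d} (hj : j.val + 1 < d) (hle : sortedEigs A j ≤ R * sortedEigs A ⟨j.val + 1, hj⟩)
    {p p' : Fin d → ℝ} (hp' : A *ᵥ p' = sortedEigs A ⟨j.val + 1, hj⟩ • p')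
    (hηp : ∀ q, A *ᵥ q = sortedEigs A j • q → (η - p) ⬝ᵥ q = 0)
    (hηp' : ∀ q, A *ᵥ q = sortedEigs A ⟨j.val + 1, hj⟩ • q → (η - p') ⬝ᵥ q = 0)
    (hcond : sortedEigs A j = R * sortedEigs A ⟨j.val + 1, hj⟩ → p ⬝ᵥ p < 1 / 2 * (p' ⬝ᵥ p')) :
    ∀ᶠ t in 𝓝[>] (0 : ℝ), sortedEigs (A * A + t • vecMulVec (A *ᵥ η) (A *ᵥ η)) j
      ≤ R ^ 2 * sortedEigs (A * A + t • vecMulVec (A *ᵥ η) (A *ᵥ η)) ⟨j.val + 1, hj⟩ := by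
  rcases hle.lt_or_eq with hlt | heq
  · refine eventually_sortedEigs_add_smul_vecMulVec_le_of_lt hA.1.mul_self (sq_nonneg R) hj ?_
    simp only [sortedEigs_mul_self hA, ← mul_pow]
    exact pow_lt_pow_left₀ hlt (sortedEigs_pos hA j).le two_ne_zero
  have hf := mulVec_sortedEigvec hA.1 j
  have hf1 := (dotOrthonormal_sortedEigvec hA.1).1 j
  have hηf : η ⬝ᵥ sortedEigvec hA.1 j = p ⬝ᵥ sortedEigvec hA.1 j := by
    linarith [sub_dotProduct η p _ ▸ hηp _ hf]
  have hCS : (p ⬝ᵥ sortedEigvec hA.1 j) ^ 2 ≤ p ⬝ᵥ p := by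
    simpa [hf1] using sq_dotProduct_le p (sortedEigvec hA.1 j)
  refine eventually_sortedEigs_le_of_posDef_of_eq hR hA hj heq hf1 hf hp' ?_ ?_
  · linarith [sub_dotProduct η p' p' ▸ hηp' p' hp']
  · rw [hηf]
    linarith [hcond heq]

end PositiveDefinite

/-- Let `R > 1`, let `A ∈ 𝒟_R` be symmetric positive definite (so its singular
values equal its eigenvalues `sortedEigs A j`), and for each `j` let `p j` be the orthogonal
projection of `η` onto the eigenspace `E_j` of `A` (characterized by `p j ∈ E_j` and
`η − p j ⊥ E_j`). If `|p j|² < ½|p (j+1)|²` whenever `λ_j(A) = R·λ_{j+1}(A)`, then for all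
sufficiently small `ε > 0` one has `A_η(ε)/s₁(A_η(ε)) ∈ 𝒟_R`, where `A_η(ε) = A(Id + ε η⊗η)`. -/
theorem stmt9 (d : ℕ) (hd : 1 ≤ d) (R : ℝ) (hR : 1 < R)
    (A : Matrix (Fin d) (Fin d) ℝ) (hA : A.PosDef) (hADR : A ∈ DR d hd R)
    (η : Fin d → ℝ) (p : Fin d → Fin d → ℝ)
    (hp1 : ∀ j : Fin d, A.mulVec (p j) = sortedEigs A j • p j)
    (hp2 : ∀ (j : Fin d) (q : Fin d → ℝ),
      A.mulVec q = sortedEigs A j • q → (η - p j) ⬝ᵥ q = 0)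
    (hcond : ∀ (j : Fin d) (h : j.val + 1 < d),
      sortedEigs A j = R * sortedEigs A ⟨j.val + 1, h⟩ →
      p j ⬝ᵥ p j < (1 / 2) * (p ⟨j.val + 1, h⟩ ⬝ᵥ p ⟨j.val + 1, h⟩)) :
    ∃ ε₀ > (0 : ℝ), ∀ ε : ℝ, 0 < ε → ε < ε₀ →
      (sval (A * (1 + ε • vecMulVec η η)) ⟨0, hd⟩)⁻¹ • (A * (1 + ε • vecMulVec η η))
        ∈ DR d hd R := by
  have hgaps : ∀ᶠ t in 𝓝[>] (0 : ℝ), ∀ (j : Fin d) (hj : j.val + 1 < d),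
      sortedEigs (A * A + t • vecMulVec (A *ᵥ η) (A *ᵥ η)) j
        ≤ R ^ 2 * sortedEigs (A * A + t • vecMulVec (A *ᵥ η) (A *ᵥ η)) ⟨j.val + 1, hj⟩ := by
    refine eventually_all.2 fun j => ?_
    by_cases hj : j.val + 1 < d
    · filter_upwards [eventually_sortedEigs_le_of_posDef hR hA hj
        (by simpa [sval_eq_sortedEigs hA] using hADR.2.2 j hj) (hp1 _) (hp2 j) (hp2 _)
        (hcond j hj)] with t ht _ using ht
    · exact .of_forall fun _ hj' => absurd hj' hj
  obtain ⟨ε₀, hε₀, hsub⟩ := mem_nhdsGT_iff_exists_Ioo_subset.1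
    ((tendsto_two_mul_add_sq_mul_nhdsGT (dotProduct_self_nonneg η)).eventually hgaps)
  refine ⟨ε₀, hε₀, fun ε hε hεε₀ => ?_⟩
  have hAT : Aᵀ = A := by simpa using hA.1.eq
  refine inv_sval_smul_mem_DR hd (by linarith) (hA.isUnit.mul
    (isUnit_one_add_smul_vecMulVec η hε.le)) ?_
  rw [mul_one_add_smul_vecMulVec_mul_transpose hAT]
  exact hsub ⟨hε, hεε₀⟩
end

section
/- Let M be a d × d real symmetric positive-definite matrix, A a d × d real symmetric invertible matrix, η ∈ ℝᵈ, and A_η(ε) = A(Id + ε η⊗η). Then for every ε ≥ 0, Tr(A_η(ε)ᵀ M A_η(ε)) ≥ Tr(AMA) + 2ε·λ_d(M)·|Aη|², where λ_d(M) > 0 denotes the smallest eigenvalue of M. -/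
/-!
Write `P = 1 + ε η⊗η`. Since `P` is symmetric and `(η⊗η)² = |η|² η⊗η`, cyclicity of the trace gives
`Tr((AP)ᵀ M (AP)) = Tr(A M A P²) = Tr(AMA) + (2ε + ε²|η|²) ⟨Aη, M Aη⟩`.
The quadratic form `⟨Aη, M Aη⟩` is nonnegative, and at least `λ_d(M) |Aη|²` because
`M - λ_d(M) • 1` is positive semidefinite.
-/

open Matrix

open scoped MatrixOrder

namespace Matrix

section CommRing

variable {n R : Type*} [Fintype n] [CommRing R]

lemma trace_mul_vecMulVec (C : Matrix n n R) (x y : n → R) :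
    trace (C * vecMulVec x y) = C *ᵥ x ⬝ᵥ y := by
  rw [mul_vecMulVec, trace_vecMulVec]

lemma one_add_smul_vecMulVec_mul_self [DecidableEq n] (ε : R) (η : n → R) :
    (1 + ε • vecMulVec η η) * (1 + ε • vecMulVec η η)
      = 1 + (2 * ε + ε ^ 2 * (η ⬝ᵥ η)) • vecMulVec η η := by
  simp only [mul_add, add_mul, one_mul, mul_one, smul_mul_smul_comm, vecMulVec_mul_vecMulVec,
    vecMulVec_smul]
  module

lemma IsSymm.trace_transpose_mul_mul_one_add_smul_vecMulVec [DecidableEq n] {A : Matrix n n R}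
    (hA : A.IsSymm) (M : Matrix n n R) (ε : R) (η : n → R) :
    trace ((A * (1 + ε • vecMulVec η η))ᵀ * M * (A * (1 + ε • vecMulVec η η)))
      = trace (A * M * A) + (2 * ε + ε ^ 2 * (η ⬝ᵥ η)) * (A *ᵥ η ⬝ᵥ M *ᵥ (A *ᵥ η)) := by
  set P := 1 + ε • vecMulVec η η
  have hP : Pᵀ = P := by simp [P, transpose_vecMulVec]
  have hq : (A * M * A) *ᵥ η ⬝ᵥ η = A *ᵥ η ⬝ᵥ M *ᵥ (A *ᵥ η) := by
    rw [dotProduct_comm, ← mulVec_mulVec, ← mulVec_mulVec, dotProduct_mulVec, ← mulVec_transpose,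
      hA.eq]
  calc trace ((A * P)ᵀ * M * (A * P)) = trace (P * (A * M * A * P)) := by
        simp only [transpose_mul, hP, hA.eq, Matrix.mul_assoc]
    _ = trace (A * M * A * (P * P)) := by rw [trace_mul_comm, Matrix.mul_assoc]
    _ = _ := by
      rw [one_add_smul_vecMulVec_mul_self, Matrix.mul_add, Matrix.mul_one, trace_add,
        Matrix.mul_smul, trace_smul, trace_mul_vecMulVec, smul_eq_mul, hq]

end CommRing

lemma IsHermitian.mul_dotProduct_self_le_dotProduct_mulVec {n : Type*} [Fintype n] [DecidableEq n]
    {M : Matrix n n ℝ} (hM : M.IsHermitian) {c : ℝ} (hc : ∀ i, c ≤ hM.eigenvalues i)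
    (x : n → ℝ) : c * (x ⬝ᵥ x) ≤ x ⬝ᵥ M *ᵥ x := by
  have hcM : algebraMap ℝ (Matrix n n ℝ) c ≤ M := by
    rw [algebraMap_le_iff_le_spectrum (p := IsSelfAdjoint) hM,
      hM.spectrum_real_eq_range_eigenvalues]
    rintro _ ⟨i, rfl⟩
    exact hc i
  have := (le_iff.mp hcM).dotProduct_mulVec_nonneg x
  simp only [star_trivial, Algebra.algebraMap_eq_smul_one, sub_mulVec, smul_mulVec, one_mulVec,
    dotProduct_sub, dotProduct_smul, smul_eq_mul] at this
  linarith

lemma IsHermitian.sortedEigs_last_le {d : ℕ} (hd : 1 ≤ d) {M : Matrix (Fin d) (Fin d) ℝ}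
    (hM : M.IsHermitian) (i : Fin d) :
    sortedEigs M ⟨d - 1, Nat.sub_one_lt_of_le hd le_rfl⟩ ≤ hM.eigenvalues i := by
  have hrev : Fin.rev (⟨d - 1, Nat.sub_one_lt_of_le hd le_rfl⟩ : Fin d) = ⟨0, by omega⟩ := by
    ext; simp only [Fin.val_rev]; omega
  rw [sortedEigs, dif_pos hM, Function.comp_apply, hrev]
  simpa using Tuple.monotone_sort hM.eigenvalues (a := ⟨0, by omega⟩)
    (b := (Tuple.sort hM.eigenvalues).symm i) (Nat.zero_le _)

end Matrix

/-- For `M` symmetric positive definite, `A` symmetric invertible,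
`A_η(ε) = A(Id + ε η⊗η)` and `ε ≥ 0`,
`Tr(A_η(ε)ᵀ M A_η(ε)) ≥ Tr(AMA) + 2ε·λ_d(M)·|Aη|²`,
where `λ_d(M) = sortedEigs M (d−1)` is the smallest eigenvalue of `M`. -/
theorem stmt11 (d : ℕ) (hd : 1 ≤ d) (M A : Matrix (Fin d) (Fin d) ℝ)
    (hM : M.PosDef) (hA : A.IsSymm) (η : Fin d → ℝ) :
    ∀ ε : ℝ, 0 ≤ ε →
      Matrix.trace ((A * (1 + ε • vecMulVec η η))ᵀ * M * (A * (1 + ε • vecMulVec η η)))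
        ≥ Matrix.trace (A * M * A)
          + 2 * ε * sortedEigs M ⟨d - 1, by omega⟩ * (A.mulVec η ⬝ᵥ A.mulVec η) := by
  intro ε hε
  rw [hA.trace_transpose_mul_mul_one_add_smul_vecMulVec]
  have hq_ge : sortedEigs M ⟨d - 1, by omega⟩ * (A *ᵥ η ⬝ᵥ A *ᵥ η) ≤ A *ᵥ η ⬝ᵥ M *ᵥ (A *ᵥ η) :=
    hM.isHermitian.mul_dotProduct_self_le_dotProduct_mulVec
      (hM.isHermitian.sortedEigs_last_le hd) _
  have hq_nonneg : 0 ≤ A *ᵥ η ⬝ᵥ M *ᵥ (A *ᵥ η) := by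
    simpa using hM.posSemidef.dotProduct_mulVec_nonneg (A *ᵥ η)
  have hηη : 0 ≤ η ⬝ᵥ η := by simpa using dotProduct_star_self_nonneg η
  linarith [mul_le_mul_of_nonneg_left hq_ge hε,
    mul_nonneg (mul_nonneg (sq_nonneg ε) hηη) hq_nonneg]
end

section
/- Let k, d, ℓ be positive integers with k ≥ 2, d > k and ℓ·(k−1) ≤ d−1, and let M₁, …, M_ℓ be d × d real symmetric positive-definite matrices. There exists a constant c₀ ∈ (0,1), depending only on M₁, …, M_ℓ, with the following property. For every R ≥ 1, if A is a symmetric positive-definite matrix in 𝒟_R minimizing f over 𝒟_R and f(A) ≥ 1/k, and w₁, …, w_d is an orthonormal eigenbasis of A with eigenvalues s₁ ≥ … ≥ s_d > 0, then there exist a unit vector ũ ∈ ℝᵈ and ε₀ > 0 such that every u ∈ ℝᵈ with |u − ũ| < c₀ satisfies f_u(ε) < f_u(0) for all ε ∈ (0, ε₀). Here, for u ∈ ℝᵈ one sets η(u) = Σ_j (u_j/s_j) w_j, A_{η(u)}(ε) = A(Id + ε η(u)⊗η(u)), I = { i : f_i(A) = f(A) }, and f_u(ε) = max_{i ∈ I}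 λ₁(A_{η(u)}(ε)ᵀ M_i A_{η(u)}(ε)) / Tr(A_{η(u)}(ε)ᵀ M_i A_{η(u)}(ε)). -/
open Matrix

/-- `fratio M A = λ₁(AᵀMA)/Tr(AᵀMA)`, the balance ratio `f_i`. -/
noncomputable def fratio {d : ℕ} (hd : 1 ≤ d) (M A : Matrix (Fin d) (Fin d) ℝ) : ℝ :=
  sortedEigs (Aᵀ * M * A) ⟨0, hd⟩ / Matrix.trace (Aᵀ * M * A)

/-!
Put `N = AᵀMA` and `C = 1 + ε ηηᵀ`, so that `f_M(AC) = λ₁(CNC) / Tr(CNC)`. The trace grows at first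
order by `2ε ηᵀNη`, whereas the spectral gap of `N` confines the first-order growth of `λ₁(CNC)` to
the components of `η` along the top eigenspace of `N`; hence `f_M` decreases along `C` as soon as
those components are small compared with `ηᵀNη`. For an active index, `f_M(A) ≥ 1/k` forces the top
eigenvalue of `N` to have multiplicity `< k`, so all active indices together impose at most
`ℓ(k-1) ≤ d-1` linear conditions on `u`, and some unit vector `ũ` meets them exactly. Since
`s₁(A) = 1`, these conditions are controlled by the spectra of the `Mᵢ` alone, which makes them hold
approximately on a ball around `ũ` whose radius `c₀` does not depend on `A`.
-/

namespace Matrix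

section OrthonormalRows

variable {n : Type*} [Fintype n] {V N : Matrix n n ℝ}

theorem sq_dotProduct_le_s14 (x y : n → ℝ) : (x ⬝ᵥ y) ^ 2 ≤ (x ⬝ᵥ x) * (y ⬝ᵥ y) := by
  simpa [dotProduct, sq] using Finset.sum_mul_sq_le_sq_mul_sq Finset.univ x y

theorem dotProduct_self_mem_Icc_of_near_unit {u u₀ : n → ℝ} (hu₀ : u₀ ⬝ᵥ u₀ = 1)
    (hu : (u - u₀) ⬝ᵥ (u - u₀) < 1 / 4) : u ⬝ᵥ u ∈ Set.Icc (1 / 4) (9 / 4) := by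
  have hcs := sq_dotProduct_le_s14 u₀ (u - u₀)
  rw [hu₀, one_mul] at hcs
  have hexp : u ⬝ᵥ u = 1 + 2 * (u₀ ⬝ᵥ (u - u₀)) + (u - u₀) ⬝ᵥ (u - u₀) := by
    simp only [dotProduct_sub, sub_dotProduct, hu₀, dotProduct_comm u₀ u]
    ring
  constructor <;> nlinarith [sq_nonneg (u₀ ⬝ᵥ (u - u₀) + 1 / 2), sq_nonneg (u₀ ⬝ᵥ (u - u₀) - 1 / 2)]

theorem dotProduct_transpose_mul_mul_mulVec (B : Matrix n n ℝ) (x y : n → ℝ) :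
    x ⬝ᵥ (Bᵀ * N * B) *ᵥ y = B *ᵥ x ⬝ᵥ N *ᵥ B *ᵥ y := by
  rw [← mulVec_mulVec, ← mulVec_mulVec, dotProduct_mulVec, vecMul_transpose]

theorem dotProduct_mulVec_of_mulVec_eq_smul (hN : Nᵀ = N) {v : n → ℝ} {μ : ℝ}
    (hv : N *ᵥ v = μ • v) (x : n → ℝ) : v ⬝ᵥ N *ᵥ x = μ * (v ⬝ᵥ x) := by
  rw [dotProduct_mulVec, ← mulVec_transpose, hN, hv, smul_dotProduct, smul_eq_mul]

variable [DecidableEq n]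

theorem mul_transpose_eq_one_iff :
    V * Vᵀ = 1 ↔ ∀ i j, V i ⬝ᵥ V j = if i = j then 1 else 0 := by
  simp only [← ext_iff, mul_apply', one_apply]
  rfl

theorem dotProduct_eq_sum_of_mul_transpose_eq_one (hV : V * Vᵀ = 1) (x y : n → ℝ) :
    x ⬝ᵥ y = ∑ r, (V r ⬝ᵥ x) * (V r ⬝ᵥ y) := by
  have hVV : Vᵀ * V = 1 := mul_eq_one_comm.mp hV
  calc x ⬝ᵥ y = x ⬝ᵥ (Vᵀ * V) *ᵥ y := by rw [hVV, one_mulVec]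
    _ = (V *ᵥ x) ⬝ᵥ (V *ᵥ y) := by
        rw [← mulVec_mulVec, dotProduct_mulVec, vecMul_transpose]
    _ = ∑ r, (V r ⬝ᵥ x) * (V r ⬝ᵥ y) := rfl

theorem dotProduct_mulVec_eq_sum_of_mul_transpose_eq_one (hV : V * Vᵀ = 1) (hN : Nᵀ = N)
    {μ : n → ℝ} (hNV : ∀ r, N *ᵥ V r = μ r • V r) (x y : n → ℝ) :
    x ⬝ᵥ N *ᵥ y = ∑ r, μ r * ((V r ⬝ᵥ x) * (V r ⬝ᵥ y)) := by
  rw [dotProduct_eq_sum_of_mul_transpose_eq_one hV]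
  refine Finset.sum_congr rfl fun r _ => ?_
  rw [dotProduct_mulVec_of_mulVec_eq_smul hN (hNV r)]
  ring

end OrthonormalRows

namespace IsHermitian

variable {n : Type*} [Fintype n] [DecidableEq n] {S : Matrix n n ℝ}

theorem eigenvectorUnitary_transpose_mul_transpose (hS : S.IsHermitian) :
    (hS.eigenvectorUnitary : Matrix n n ℝ)ᵀ * (hS.eigenvectorUnitary : Matrix n n ℝ)ᵀᵀ = 1 := by
  rw [transpose_transpose, ← conjTranspose_eq_transpose_of_trivial, ← star_eq_conjTranspose]
  exact Unitary.coe_star_mul_self _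

theorem eigenvectorBasis_dotProduct_self (hS : S.IsHermitian) (j : n) :
    ⇑(hS.eigenvectorBasis j) ⬝ᵥ ⇑(hS.eigenvectorBasis j) = 1 := by
  simpa using mul_transpose_eq_one_iff.mp hS.eigenvectorUnitary_transpose_mul_transpose j j

theorem trace_eq_sum_eigenvalues_real (hS : S.IsHermitian) :
    S.trace = ∑ r, hS.eigenvalues r := by
  simpa using hS.trace_eq_sum_eigenvalues

theorem eigenvectorBasis_dotProduct_mulVec (hS : S.IsHermitian) (r : n) (x : n → ℝ) :
    ⇑(hS.eigenvectorBasis r) ⬝ᵥ S *ᵥ x = hS.eigenvalues r * (⇑(hS.eigenvectorBasis r) ⬝ᵥ x) :=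
  dotProduct_mulVec_of_mulVec_eq_smul (isHermitian_iff_isSymm.mp hS).eq
    (hS.mulVec_eigenvectorBasis r) x

theorem dotProduct_eq_sum_eigenvectorBasis (hS : S.IsHermitian) (x y : n → ℝ) :
    x ⬝ᵥ y = ∑ r, (⇑(hS.eigenvectorBasis r) ⬝ᵥ x) * (⇑(hS.eigenvectorBasis r) ⬝ᵥ y) :=
  dotProduct_eq_sum_of_mul_transpose_eq_one hS.eigenvectorUnitary_transpose_mul_transpose x y

theorem dotProduct_mulVec_eq_sum_eigenvalues (hS : S.IsHermitian) (x y : n → ℝ) :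
    x ⬝ᵥ S *ᵥ y = ∑ r, hS.eigenvalues r *
      ((⇑(hS.eigenvectorBasis r) ⬝ᵥ x) * (⇑(hS.eigenvectorBasis r) ⬝ᵥ y)) :=
  dotProduct_mulVec_eq_sum_of_mul_transpose_eq_one hS.eigenvectorUnitary_transpose_mul_transpose
    (isHermitian_iff_isSymm.mp hS).eq hS.mulVec_eigenvectorBasis x y

theorem dotProduct_mulVec_le_of_eigenvalues_le (hS : S.IsHermitian) {L : ℝ}
    (hL : ∀ r, hS.eigenvalues r ≤ L) (x : n → ℝ) : x ⬝ᵥ S *ᵥ x ≤ L * (x ⬝ᵥ x) := by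
  rw [hS.dotProduct_mulVec_eq_sum_eigenvalues, hS.dotProduct_eq_sum_eigenvectorBasis x x,
    Finset.mul_sum]
  exact Finset.sum_le_sum fun r _ => mul_le_mul_of_nonneg_right (hL r) (mul_self_nonneg _)

theorem le_dotProduct_mulVec_of_le_eigenvalues (hS : S.IsHermitian) {m : ℝ}
    (hm : ∀ r, m ≤ hS.eigenvalues r) (x : n → ℝ) : m * (x ⬝ᵥ x) ≤ x ⬝ᵥ S *ᵥ x := by
  rw [hS.dotProduct_mulVec_eq_sum_eigenvalues, hS.dotProduct_eq_sum_eigenvectorBasis x x,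
    Finset.mul_sum]
  exact Finset.sum_le_sum fun r _ => mul_le_mul_of_nonneg_right (hm r) (mul_self_nonneg _)

theorem mulVec_dotProduct_mulVec_le (hS : S.IsHermitian) {L : ℝ}
    (h0 : ∀ r, 0 ≤ hS.eigenvalues r) (hL : ∀ r, hS.eigenvalues r ≤ L) (x : n → ℝ) :
    S *ᵥ x ⬝ᵥ S *ᵥ x ≤ L ^ 2 * (x ⬝ᵥ x) := by
  rw [hS.dotProduct_eq_sum_eigenvectorBasis, hS.dotProduct_eq_sum_eigenvectorBasis x x,
    Finset.mul_sum]
  refine Finset.sum_le_sum fun r _ => ?_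
  rw [hS.eigenvectorBasis_dotProduct_mulVec]
  have := pow_le_pow_left₀ (h0 r) (hL r) 2
  nlinarith [mul_self_nonneg (⇑(hS.eigenvectorBasis r) ⬝ᵥ x)]

end IsHermitian
end Matrix

open Matrix

theorem exists_pos_forall_le_of_finite {α : Type*} [Finite α] (f : α → ℝ) (hf : ∀ a, 0 < f a) :
    ∃ m > 0, ∀ a, m ≤ f a := by
  cases isEmpty_or_nonempty α
  · exact ⟨1, one_pos, isEmptyElim⟩
  · obtain ⟨a₀, ha₀⟩ := Finite.exists_min f
    exact ⟨f a₀, hf a₀, ha₀⟩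

theorem sq_sum_mul_mul_le {ι : Type*} (s : Finset ι) {μ c h : ι → ℝ} {lam : ℝ}
    (hμ : ∀ r ∈ s, 0 ≤ μ r ∧ μ r ≤ lam) :
    (∑ r ∈ s, μ r * (c r * h r)) ^ 2 ≤ lam ^ 2 * ((∑ r ∈ s, c r ^ 2) * ∑ r ∈ s, h r ^ 2) := by
  have hμh : ∑ r ∈ s, (μ r * h r) ^ 2 ≤ lam ^ 2 * ∑ r ∈ s, h r ^ 2 := by
    rw [Finset.mul_sum]
    refine Finset.sum_le_sum fun r hr => ?_
    rw [mul_pow]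
    exact mul_le_mul_of_nonneg_right (pow_le_pow_left₀ (hμ r hr).1 (hμ r hr).2 2) (sq_nonneg _)
  calc (∑ r ∈ s, μ r * (c r * h r)) ^ 2 = (∑ r ∈ s, (μ r * h r) * c r) ^ 2 := by
        simp only [mul_comm (c _), mul_assoc]
    _ ≤ (∑ r ∈ s, (μ r * h r) ^ 2) * ∑ r ∈ s, c r ^ 2 := Finset.sum_mul_sq_le_sq_mul_sq _ _ _
    _ ≤ lam ^ 2 * ((∑ r ∈ s, c r ^ 2) * ∑ r ∈ s, h r ^ 2) := by
        nlinarith [Finset.sum_nonneg fun r (_ : r ∈ s) => sq_nonneg (c r)]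

theorem exists_pos_le_half_mul_sq_le {X m : ℝ} (hX : 0 ≤ X) (hm : 0 < m) :
    ∃ c, 0 < c ∧ c ≤ 1 / 2 ∧ X * c ^ 2 ≤ m := by
  set c := min (1 / 2 : ℝ) (m / (X + 1))
  have hc : 0 < c := by positivity
  have hc_half : c ≤ 1 / 2 := min_le_left _ _
  have hc_mul : (X + 1) * c ≤ m :=
    (mul_le_mul_of_nonneg_left (min_le_right _ _) (by positivity)).trans_eq (by field_simp)
  exact ⟨c, hc, hc_half, by nlinarith⟩

theorem ciSup_lt_ciSup_of_forall_lt {ι : Type*} [Finite ι] [Nonempty ι] {f g : ι → ℝ}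
    (h : ∀ i, f i < g i) : ⨆ i, f i < ⨆ i, g i := by
  obtain ⟨i, hi⟩ := exists_eq_ciSup_of_finite (f := f)
  exact hi ▸ (h i).trans_le (le_ciSup (Finite.bddAbove_range g) i)

section PerturbationEstimate

variable {ι : Type*} [Fintype ι] [DecidableEq ι] (top : Finset ι) {μ c h : ι → ℝ} {lam γ B : ℝ}

theorem sum_mul_sq_le_of_gap (hc : ∑ r, c r ^ 2 = 1) (htop : ∀ r ∈ top, μ r = lam)
    (hgap : ∀ r ∉ top, μ r ≤ lam - γ) :
    ∑ r, μ r * c r ^ 2 ≤ lam - γ * ∑ r ∈ topᶜ, c r ^ 2 := by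
  have htopc : ∑ r ∈ top, c r ^ 2 = 1 - ∑ r ∈ topᶜ, c r ^ 2 := by
    rw [← hc, ← Finset.sum_add_sum_compl top]
    ring
  rw [← Finset.sum_add_sum_compl top, Finset.sum_congr rfl fun r hr => by rw [htop r hr],
    ← Finset.mul_sum, htopc]
  have hcompl : ∑ r ∈ topᶜ, μ r * c r ^ 2 ≤ (lam - γ) * ∑ r ∈ topᶜ, c r ^ 2 := by
    rw [Finset.mul_sum]
    exact Finset.sum_le_sum fun r hr =>
      mul_le_mul_of_nonneg_right (hgap r (Finset.mem_compl.mp hr)) (sq_nonneg _)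
  nlinarith

theorem sum_mul_mul_sum_mul_le (hc : ∑ r, c r ^ 2 = 1) (htop : ∀ r ∈ top, μ r = lam)
    (hgap : ∀ r ∉ top, μ r ≤ lam - γ) (hγ : 0 ≤ γ) (hμ : ∀ r, 0 ≤ μ r) (hlam : 0 < lam)
    (hB : ∑ r ∈ top, h r ^ 2 ≤ B) :
    (∑ r, c r * h r) * ∑ r, μ r * (c r * h r) ≤
      2 * lam * (B + (∑ r ∈ topᶜ, c r ^ 2) * ∑ r, h r ^ 2) := by
  set ρ := ∑ r ∈ topᶜ, c r ^ 2
  set H := ∑ r, h r ^ 2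
  have hρ : 0 ≤ ρ := Finset.sum_nonneg fun r _ => sq_nonneg _
  have hH : ∑ r ∈ topᶜ, h r ^ 2 ≤ H :=
    Finset.sum_le_univ_sum_of_nonneg fun r => sq_nonneg _
  have hctop : ∑ r ∈ top, c r ^ 2 ≤ 1 :=
    hc ▸ Finset.sum_le_univ_sum_of_nonneg fun r => sq_nonneg _
  have hs : ∑ r, c r * h r = ∑ r ∈ top, c r * h r + ∑ r ∈ topᶜ, c r * h r :=
    (Finset.sum_add_sum_compl top _).symm
  have hW : ∑ r, μ r * (c r * h r) =
      lam * ∑ r ∈ top, c r * h r + ∑ r ∈ topᶜ, μ r * (c r * h r) := by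
    rw [← Finset.sum_add_sum_compl top, Finset.mul_sum]
    congr 1
    exact Finset.sum_congr rfl fun r hr => by rw [htop r hr]
  have hs₁ : (∑ r ∈ top, c r * h r) ^ 2 ≤ B :=
    (Finset.sum_mul_sq_le_sq_mul_sq top c h).trans <| by
      nlinarith [Finset.sum_nonneg fun r (_ : r ∈ top) => sq_nonneg (c r),
        Finset.sum_nonneg fun r (_ : r ∈ top) => sq_nonneg (h r)]
  have hs₂ : (∑ r ∈ topᶜ, c r * h r) ^ 2 ≤ ρ * H :=
    (Finset.sum_mul_sq_le_sq_mul_sq topᶜ c h).trans (mul_le_mul_of_nonneg_left hH hρ)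
  have hW₂ : (∑ r ∈ topᶜ, μ r * (c r * h r)) ^ 2 ≤ lam ^ 2 * (ρ * H) :=
    (sq_sum_mul_mul_le topᶜ fun r hr =>
      ⟨hμ r, (hgap r (Finset.mem_compl.mp hr)).trans (by linarith)⟩).trans
      (mul_le_mul_of_nonneg_left (mul_le_mul_of_nonneg_left hH hρ) (sq_nonneg lam))
  rw [hs, hW]
  set s₁ := ∑ r ∈ top, c r * h r
  set s₂ := ∑ r ∈ topᶜ, c r * h r
  set W₂ := ∑ r ∈ topᶜ, μ r * (c r * h r)
  have hs_sq : (s₁ + s₂) ^ 2 ≤ 2 * (B + ρ * H) := by nlinarith [sq_nonneg (s₁ - s₂)]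
  have hW_sq : (lam * s₁ + W₂) ^ 2 ≤ 2 * lam ^ 2 * (B + ρ * H) := by
    nlinarith [sq_nonneg (lam * s₁ - W₂)]
  have hamgm : 2 * lam * ((s₁ + s₂) * (lam * s₁ + W₂)) ≤ 2 * lam * (2 * lam * (B + ρ * H)) := by
    nlinarith [sq_nonneg (lam * (s₁ + s₂) - (lam * s₁ + W₂))]
  exact le_of_mul_le_mul_left hamgm (by positivity)

theorem sum_mul_add_sq_le (hc : ∑ r, c r ^ 2 = 1) (htop : ∀ r ∈ top, μ r = lam)
    (hgap : ∀ r ∉ top, μ r ≤ lam - γ) (hγ : 0 ≤ γ) (hμ : ∀ r, 0 ≤ μ r) (hlam : 0 < lam)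
    (hB : ∑ r ∈ top, h r ^ 2 ≤ B) {ε : ℝ} (hε : 0 ≤ ε) :
    ∑ r, μ r * (c r + ε * (∑ r, c r * h r) * h r) ^ 2 ≤
      lam - γ * ∑ r ∈ topᶜ, c r ^ 2 +
        4 * ε * lam * (B + (∑ r ∈ topᶜ, c r ^ 2) * ∑ r, h r ^ 2) +
        ε ^ 2 * (∑ r, h r ^ 2) * ∑ r, μ r * h r ^ 2 := by
  set s := ∑ r, c r * h r
  have hexpand : ∑ r, μ r * (c r + ε * s * h r) ^ 2 =
      ∑ r, μ r * c r ^ 2 + 2 * ε * (s * ∑ r, μ r * (c r * h r)) +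
        ε ^ 2 * s ^ 2 * ∑ r, μ r * h r ^ 2 := by
    simp only [Finset.mul_sum, ← Finset.sum_add_distrib]
    exact Finset.sum_congr rfl fun r _ => by ring
  have hs : s ^ 2 ≤ ∑ r, h r ^ 2 := by
    simpa [hc] using Finset.sum_mul_sq_le_sq_mul_sq Finset.univ c h
  have hG : 0 ≤ ∑ r, μ r * h r ^ 2 := Finset.sum_nonneg fun r _ => by have := hμ r; positivity
  rw [hexpand]
  have hmid := sum_mul_mul_sum_mul_le top hc htop hgap hγ hμ hlam hB
  have hfirst := sum_mul_sq_le_of_gap top hc htop hgap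
  have hlast : ε ^ 2 * s ^ 2 * ∑ r, μ r * h r ^ 2 ≤ ε ^ 2 * (∑ r, h r ^ 2) * ∑ r, μ r * h r ^ 2 :=
    mul_le_mul_of_nonneg_right (mul_le_mul_of_nonneg_left hs (sq_nonneg ε)) hG
  nlinarith

end PerturbationEstimate

theorem exists_unit_forall_dotProduct_eq_zero {ι n : Type*} [Fintype n] (S : Finset ι)
    (q : ι → n → ℝ) (hS : S.card < Fintype.card n) :
    ∃ u : n → ℝ, u ⬝ᵥ u = 1 ∧ ∀ p ∈ S, q p ⬝ᵥ u = 0 := by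
  let Φ : (n → ℝ) →ₗ[ℝ] (S → ℝ) :=
    { toFun := fun u p => q p ⬝ᵥ u
      map_add' := fun u v => by ext p; simp [dotProduct_add]
      map_smul' := fun c u => by ext p; simp [dotProduct_smul] }
  obtain ⟨v, hv, hv0⟩ := Submodule.exists_mem_ne_zero_of_ne_bot
    (LinearMap.ker_ne_bot_of_finrank_lt (f := Φ) (by simpa using hS))
  have hvv : 0 < v ⬝ᵥ v :=
    (dotProduct_self_star_nonneg v).lt_of_ne fun h => hv0 (dotProduct_self_eq_zero.mp h.symm)
  refine ⟨(Real.sqrt (v ⬝ᵥ v))⁻¹ • v, ?_, fun p hp => ?_⟩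
  · rw [smul_dotProduct, dotProduct_smul, smul_eq_mul, smul_eq_mul, ← mul_assoc, ← sq, inv_pow,
      Real.sq_sqrt hvv.le, inv_mul_cancel₀ hvv.ne']
  · rw [dotProduct_smul, show q p ⬝ᵥ v = 0 from congrFun (LinearMap.mem_ker.mp hv) ⟨p, hp⟩,
      smul_zero]

theorem posSemidef_transpose_mul_self {n : Type*} [Fintype n] (A : Matrix n n ℝ) :
    (Aᵀ * A).PosSemidef := by
  simpa using posSemidef_conjTranspose_mul_self A

theorem posDef_transpose_mul_mul {n : Type*} [Fintype n] [DecidableEq n] {M A : Matrix n n ℝ}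
    (hM : M.PosDef) (hA : IsUnit A) : (Aᵀ * M * A).PosDef := by
  simpa using hM.conjTranspose_mul_mul_same (mulVec_injective_iff_isUnit.mpr hA)

theorem exists_uniform_eigenvalue_bounds {ι n : Type*} [Finite ι] [Fintype n] [DecidableEq n]
    {M : ι → Matrix n n ℝ} (hM : ∀ i, (M i).PosDef) :
    ∃ m > 0, ∃ L > 0, ∀ i r, m ≤ (hM i).1.eigenvalues r ∧ (hM i).1.eigenvalues r ≤ L := by
  obtain ⟨m, hm, hmle⟩ := exists_pos_forall_le_of_finite
    (fun p : ι × n => (hM p.1).1.eigenvalues p.2) fun p => (hM p.1).eigenvalues_pos p.2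
  obtain ⟨L, hL⟩ := Finite.bddAbove_range fun p : ι × n => (hM p.1).1.eigenvalues p.2
  refine ⟨m, hm, max L 1, by positivity, fun i r => ⟨hmle (i, r), ?_⟩⟩
  exact (hL (Set.mem_range_self (i, r))).trans (le_max_left _ _)

theorem trace_transpose_mul_mul_eq_sum {n : Type*} [Fintype n] (B M : Matrix n n ℝ) :
    (Bᵀ * M * B).trace = ∑ j, Bᵀ j ⬝ᵥ M *ᵥ Bᵀ j := by
  refine Finset.sum_congr rfl fun j _ => ?_
  rw [diag_apply, Matrix.mul_assoc, mul_apply']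
  rfl

theorem trace_transpose_mul_self_eq_sum {n : Type*} [Fintype n] [DecidableEq n]
    (B : Matrix n n ℝ) : (Bᵀ * B).trace = ∑ j, Bᵀ j ⬝ᵥ Bᵀ j := by
  simpa using trace_transpose_mul_mul_eq_sum B 1

theorem le_trace_transpose_mul_mul {n : Type*} [Fintype n] [DecidableEq n] (B M : Matrix n n ℝ)
    {m : ℝ} (hm : ∀ x, m * (x ⬝ᵥ x) ≤ x ⬝ᵥ M *ᵥ x) : m * (Bᵀ * B).trace ≤ (Bᵀ * M * B).trace := by
  rw [trace_transpose_mul_self_eq_sum, trace_transpose_mul_mul_eq_sum, Finset.mul_sum]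
  exact Finset.sum_le_sum fun j _ => hm _

theorem trace_transpose_mul_mul_le {n : Type*} [Fintype n] [DecidableEq n] (B M : Matrix n n ℝ)
    {L : ℝ} (hL : ∀ x, x ⬝ᵥ M *ᵥ x ≤ L * (x ⬝ᵥ x)) : (Bᵀ * M * B).trace ≤ L * (Bᵀ * B).trace := by
  rw [trace_transpose_mul_self_eq_sum, trace_transpose_mul_mul_eq_sum, Finset.mul_sum]
  exact Finset.sum_le_sum fun j _ => hL _

section RankOnePerturbation

variable {n : Type*}

theorem transpose_one_add_smul_vecMulVec [DecidableEq n] (ε : ℝ) (η : n → ℝ) :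
    (1 + ε • vecMulVec η η)ᵀ = 1 + ε • vecMulVec η η := by
  rw [transpose_add, transpose_one, transpose_smul, transpose_vecMulVec]

variable [Fintype n]

theorem trace_vecMulVec_mul (a b : n → ℝ) (N : Matrix n n ℝ) :
    (vecMulVec a b * N).trace = b ⬝ᵥ N *ᵥ a := by
  rw [vecMulVec_mul, trace_vecMulVec, dotProduct_comm, dotProduct_mulVec]

variable [DecidableEq n]

theorem trace_one_add_smul_vecMulVec_mul_mul (ε : ℝ) (η : n → ℝ) (N : Matrix n n ℝ) :
    ((1 + ε • vecMulVec η η) * N * (1 + ε • vecMulVec η η)).trace =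
      N.trace + 2 * ε * (η ⬝ᵥ N *ᵥ η) + ε ^ 2 * (η ⬝ᵥ η) * (η ⬝ᵥ N *ᵥ η) := by
  set P := vecMulVec η η
  have hexpand : (1 + ε • P) * N * (1 + ε • P) =
      N + ε • (P * N) + ε • (N * P) + (ε * ε) • (P * (N * P)) := by
    simp only [add_mul, mul_add, one_mul, mul_one, Matrix.smul_mul, Matrix.mul_smul, smul_smul,
      mul_assoc]
    abel
  rw [hexpand, trace_add, trace_add, trace_add, trace_smul, trace_smul, trace_smul,
    trace_mul_comm N, trace_vecMulVec_mul, trace_vecMulVec_mul, ← mulVec_mulVec,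
    vecMulVec_mulVec, mulVec_smul]
  simp only [smul_eq_mul, MulOpposite.smul_eq_mul_unop, MulOpposite.unop_op, dotProduct_smul]
  ring

theorem one_add_smul_vecMulVec_mulVec (ε : ℝ) (η x : n → ℝ) :
    (1 + ε • vecMulVec η η) *ᵥ x = x + (ε * (η ⬝ᵥ x)) • η := by
  rw [add_mulVec, one_mulVec, smul_mulVec, vecMulVec_mulVec, op_smul_eq_smul, smul_smul]

end RankOnePerturbation

section EigenDirection

variable {n : Type*} [Fintype n] {W A : Matrix n n ℝ} {s : n → ℝ}

theorem sum_smul_dotProduct_sum_smul [DecidableEq n] (hW : W * Wᵀ = 1) (a b : n → ℝ) :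
    (∑ j, a j • W j) ⬝ᵥ (∑ j, b j • W j) = a ⬝ᵥ b := by
  rw [← vecMul_eq_sum, ← vecMul_eq_sum, ← dotProduct_mulVec, ← mulVec_transpose, mulVec_mulVec,
    hW, one_mulVec]

theorem dotProduct_sum_div_smul (v u : n → ℝ) :
    v ⬝ᵥ ∑ j, (u j / s j) • W j = (fun j => (v ⬝ᵥ W j) / s j) ⬝ᵥ u := by
  rw [← vecMul_eq_sum, dotProduct_comm, ← dotProduct_mulVec]
  refine Finset.sum_congr rfl fun j _ => ?_
  rw [mulVec, dotProduct_comm]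
  ring

theorem mulVec_sum_div_smul (hAW : ∀ j, A *ᵥ W j = s j • W j) (hs : ∀ j, s j ≠ 0) (u : n → ℝ) :
    A *ᵥ ∑ j, (u j / s j) • W j = ∑ j, u j • W j := by
  simp only [mulVec_sum, mulVec_smul, hAW, smul_smul, div_mul_cancel₀ _ (hs _)]

-- `j ↦ (e ⬝ᵥ W j) / s j` is the coordinate vector of `A⁻¹ e` in the eigenbasis `W` of `A`.
theorem coords_div_eq_of_mulVec_eq_smul (hAW : ∀ j, A *ᵥ W j = s j • W j)
    (hs : ∀ j, s j ≠ 0) {M : Matrix n n ℝ} {e : n → ℝ} {lam : ℝ}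
    (he : (Aᵀ * M * A) *ᵥ e = lam • e) (hlam : lam ≠ 0) (j : n) :
    (e ⬝ᵥ W j) / s j = (W j ⬝ᵥ M *ᵥ A *ᵥ e) / lam := by
  rw [div_eq_div_iff (hs j) hlam]
  calc (e ⬝ᵥ W j) * lam = W j ⬝ᵥ (Aᵀ * M * A) *ᵥ e := by
        rw [he, dotProduct_smul, smul_eq_mul, dotProduct_comm, mul_comm]
    _ = (A *ᵥ W j) ⬝ᵥ M *ᵥ A *ᵥ e := dotProduct_transpose_mul_mul_mulVec A _ _
    _ = (W j ⬝ᵥ M *ᵥ A *ᵥ e) * s j := by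
        rw [hAW, smul_dotProduct, smul_eq_mul, mul_comm]

theorem coords_div_dotProduct_self [DecidableEq n] (hW : W * Wᵀ = 1)
    (hAW : ∀ j, A *ᵥ W j = s j • W j) (hs : ∀ j, s j ≠ 0) {M : Matrix n n ℝ} {e : n → ℝ}
    {lam : ℝ} (he : (Aᵀ * M * A) *ᵥ e = lam • e) (hlam : lam ≠ 0) :
    (fun j => (e ⬝ᵥ W j) / s j) ⬝ᵥ (fun j => (e ⬝ᵥ W j) / s j) =
      (M *ᵥ A *ᵥ e) ⬝ᵥ (M *ᵥ A *ᵥ e) / lam ^ 2 := by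
  rw [dotProduct_eq_sum_of_mul_transpose_eq_one hW (M *ᵥ A *ᵥ e), Finset.sum_div]
  refine Finset.sum_congr rfl fun j _ => ?_
  dsimp only
  rw [coords_div_eq_of_mulVec_eq_smul hAW hs he hlam]
  ring

theorem coords_div_dotProduct_self_le [DecidableEq n] (hW : W * Wᵀ = 1)
    (hAW : ∀ j, A *ᵥ W j = s j • W j) (hs : ∀ j, s j ≠ 0) {M : Matrix n n ℝ} {e : n → ℝ}
    {lam L : ℝ} (he : (Aᵀ * M * A) *ᵥ e = lam • e) (hlam : 0 < lam)
    (hAe : A *ᵥ e ⬝ᵥ A *ᵥ e ≤ 1) (hM : ∀ x, M *ᵥ x ⬝ᵥ M *ᵥ x ≤ L ^ 2 * (x ⬝ᵥ x)) :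
    (fun j => (e ⬝ᵥ W j) / s j) ⬝ᵥ (fun j => (e ⬝ᵥ W j) / s j) ≤ (L / lam) ^ 2 := by
  rw [coords_div_dotProduct_self hW hAW hs he hlam.ne', div_pow]
  gcongr
  nlinarith [hM (A *ᵥ e), sq_nonneg L]

theorem sum_div_smul_dotProduct_self_le [DecidableEq n] (hW : W * Wᵀ = 1) {smin : ℝ}
    (hsmin : 0 < smin) (hs : ∀ j, smin ≤ s j) (u : n → ℝ) :
    (∑ j, (u j / s j) • W j) ⬝ᵥ (∑ j, (u j / s j) • W j) ≤ (u ⬝ᵥ u) / smin ^ 2 := by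
  rw [sum_smul_dotProduct_sum_smul hW, dotProduct, dotProduct, Finset.sum_div]
  refine Finset.sum_le_sum fun j _ => ?_
  rw [div_mul_div_comm, ← sq, ← sq]
  exact div_le_div_of_nonneg_left (sq_nonneg _) (by positivity)
    (pow_le_pow_left₀ hsmin.le (hs j) 2)

theorem le_dotProduct_conj_mulVec_sum_div_smul [DecidableEq n] (hW : W * Wᵀ = 1)
    (hAW : ∀ j, A *ᵥ W j = s j • W j) (hs : ∀ j, s j ≠ 0) {M : Matrix n n ℝ} {m : ℝ}
    (hm : ∀ x, m * (x ⬝ᵥ x) ≤ x ⬝ᵥ M *ᵥ x) (u : n → ℝ) :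
    m * (u ⬝ᵥ u) ≤
      (∑ j, (u j / s j) • W j) ⬝ᵥ (Aᵀ * M * A) *ᵥ (∑ j, (u j / s j) • W j) := by
  rw [dotProduct_transpose_mul_mul_mulVec, mulVec_sum_div_smul hAW hs,
    ← sum_smul_dotProduct_sum_smul hW u u]
  exact hm _

theorem sq_dotProduct_sum_div_smul_le {e u u₀ : n → ℝ}
    (horth : (fun j => (e ⬝ᵥ W j) / s j) ⬝ᵥ u₀ = 0) :
    (e ⬝ᵥ ∑ j, (u j / s j) • W j) ^ 2 ≤
      ((fun j => (e ⬝ᵥ W j) / s j) ⬝ᵥ (fun j => (e ⬝ᵥ W j) / s j)) *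
        ((u - u₀) ⬝ᵥ (u - u₀)) := by
  rw [dotProduct_sum_div_smul, ← sub_zero (_ ⬝ᵥ u), ← horth, ← dotProduct_sub]
  exact sq_dotProduct_le_s14 _ _

end EigenDirection

section FinDim

variable {d : ℕ}

section SortedEigs

variable {S : Matrix (Fin d) (Fin d) ℝ}

theorem eigenvalues_le_sortedEigs_zero_s14 (hd : 1 ≤ d) (hS : S.IsHermitian) (r : Fin d) :
    hS.eigenvalues r ≤ sortedEigs S ⟨0, hd⟩ := by
  obtain ⟨i, rfl⟩ := (Tuple.sort hS.eigenvalues).surjective r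
  rw [sortedEigs, dif_pos hS]
  exact Tuple.monotone_sort hS.eigenvalues (by simp [Fin.le_def]; omega)

theorem exists_eigenvalues_eq_sortedEigs_zero (hd : 1 ≤ d) (hS : S.IsHermitian) :
    ∃ j, hS.eigenvalues j = sortedEigs S ⟨0, hd⟩ := by
  rw [sortedEigs, dif_pos hS]
  exact ⟨_, rfl⟩

theorem exists_dotProduct_mulVec_eq_sortedEigs_zero (hd : 1 ≤ d) (hS : S.IsHermitian) :
    ∃ x, x ⬝ᵥ x = 1 ∧ x ⬝ᵥ S *ᵥ x = sortedEigs S ⟨0, hd⟩ := by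
  obtain ⟨j, hj⟩ := exists_eigenvalues_eq_sortedEigs_zero hd hS
  refine ⟨hS.eigenvectorBasis j, hS.eigenvectorBasis_dotProduct_self j, ?_⟩
  rw [hS.eigenvectorBasis_dotProduct_mulVec, hS.eigenvectorBasis_dotProduct_self, mul_one, hj]

theorem dotProduct_mulVec_le_sortedEigs_zero (hd : 1 ≤ d) (hS : S.IsHermitian) (x : Fin d → ℝ) :
    x ⬝ᵥ S *ᵥ x ≤ sortedEigs S ⟨0, hd⟩ * (x ⬝ᵥ x) :=
  hS.dotProduct_mulVec_le_of_eigenvalues_le (eigenvalues_le_sortedEigs_zero_s14 hd hS) x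

theorem sortedEigs_pos_s14 (hS : S.PosDef) (j : Fin d) : 0 < sortedEigs S j := by
  rw [sortedEigs, dif_pos hS.1]
  exact hS.eigenvalues_pos _

end SortedEigs

section UnitTopSingularValue

variable {A : Matrix (Fin d) (Fin d) ℝ} (hd : 1 ≤ d)

theorem mulVec_dotProduct_mulVec_le_of_sval_zero_eq_one (hA : sval A ⟨0, hd⟩ = 1)
    (x : Fin d → ℝ) : A *ᵥ x ⬝ᵥ A *ᵥ x ≤ x ⬝ᵥ x := by
  have h := dotProduct_mulVec_le_sortedEigs_zero hd (posSemidef_transpose_mul_self A).1 x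
  rwa [Real.sqrt_eq_one.mp hA, one_mul, ← mulVec_mulVec, dotProduct_mulVec, vecMul_transpose]
    at h

theorem one_le_trace_transpose_mul_self (hA : sval A ⟨0, hd⟩ = 1) : 1 ≤ (Aᵀ * A).trace := by
  have hpsd := posSemidef_transpose_mul_self A
  obtain ⟨j, hj⟩ := exists_eigenvalues_eq_sortedEigs_zero hd hpsd.1
  rw [hpsd.1.trace_eq_sum_eigenvalues_real]
  calc (1 : ℝ) = hpsd.1.eigenvalues j := by rw [hj]; exact (Real.sqrt_eq_one.mp hA).symm
    _ ≤ ∑ r, hpsd.1.eigenvalues r :=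
      Finset.single_le_sum (fun r _ => hpsd.eigenvalues_nonneg r) (Finset.mem_univ j)

theorem trace_transpose_mul_self_le (hA : sval A ⟨0, hd⟩ = 1) : (Aᵀ * A).trace ≤ d := by
  have hpsd := posSemidef_transpose_mul_self A
  rw [hpsd.1.trace_eq_sum_eigenvalues_real]
  calc ∑ r, hpsd.1.eigenvalues r ≤ ∑ _r : Fin d, (1 : ℝ) := by
        refine Finset.sum_le_sum fun r _ => ?_
        have := eigenvalues_le_sortedEigs_zero_s14 hd hpsd.1 r
        rwa [Real.sqrt_eq_one.mp hA] at this
    _ = d := by simp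

end UnitTopSingularValue

theorem fratio_mul (hd : 1 ≤ d) (M A C : Matrix (Fin d) (Fin d) ℝ) :
    fratio hd M (A * C) = fratio hd (Aᵀ * M * A) C := by
  simp only [fratio, transpose_mul, Matrix.mul_assoc]

theorem fratio_one (hd : 1 ≤ d) (N : Matrix (Fin d) (Fin d) ℝ) :
    fratio hd N 1 = sortedEigs N ⟨0, hd⟩ / N.trace := by
  simp [fratio]

theorem exists_sortedEigs_conj_le (hd : 1 ≤ d) {N : Matrix (Fin d) (Fin d) ℝ} (hN : N.PosDef)
    {γ B ε : ℝ} (hγ : 0 ≤ γ)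
    (hgap : ∀ r, hN.1.eigenvalues r ≠ sortedEigs N ⟨0, hd⟩ →
      hN.1.eigenvalues r ≤ sortedEigs N ⟨0, hd⟩ - γ) (η : Fin d → ℝ)
    (hB : ∑ r with hN.1.eigenvalues r = sortedEigs N ⟨0, hd⟩,
      (⇑(hN.1.eigenvectorBasis r) ⬝ᵥ η) ^ 2 ≤ B) (hε : 0 ≤ ε) :
    ∃ ρ ≥ 0, sortedEigs ((1 + ε • vecMulVec η η)ᵀ * N * (1 + ε • vecMulVec η η)) ⟨0, hd⟩ ≤
      sortedEigs N ⟨0, hd⟩ - γ * ρ + 4 * ε * sortedEigs N ⟨0, hd⟩ * (B + ρ * (η ⬝ᵥ η)) +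
        ε ^ 2 * (η ⬝ᵥ η) * (η ⬝ᵥ N *ᵥ η) := by
  set C : Matrix (Fin d) (Fin d) ℝ := 1 + ε • vecMulVec η η
  have hS : (Cᵀ * N * C).IsHermitian := by
    simpa using isHermitian_conjTranspose_mul_mul C hN.1
  obtain ⟨x, hx, hxS⟩ := exists_dotProduct_mulVec_eq_sortedEigs_zero hd hS
  set E : Fin d → Fin d → ℝ := fun r => hN.1.eigenvectorBasis r
  have hc : ∑ r, (E r ⬝ᵥ x) ^ 2 = 1 := by
    simp only [sq]
    exact (hN.1.dotProduct_eq_sum_eigenvectorBasis x x).symm.trans hx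
  have hηx : η ⬝ᵥ x = ∑ r, (E r ⬝ᵥ x) * (E r ⬝ᵥ η) := by
    rw [hN.1.dotProduct_eq_sum_eigenvectorBasis]
    exact Finset.sum_congr rfl fun r _ => mul_comm _ _
  have hquad : x ⬝ᵥ (Cᵀ * N * C) *ᵥ x = ∑ r, hN.1.eigenvalues r *
      ((E r ⬝ᵥ x) + ε * (∑ r, (E r ⬝ᵥ x) * (E r ⬝ᵥ η)) * (E r ⬝ᵥ η)) ^ 2 := by
    rw [dotProduct_transpose_mul_mul_mulVec, hN.1.dotProduct_mulVec_eq_sum_eigenvalues,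
      one_add_smul_vecMulVec_mulVec, hηx]
    refine Finset.sum_congr rfl fun r _ => ?_
    simp only [dotProduct_add, dotProduct_smul, smul_eq_mul, E]
    ring
  have hH : ∑ r, (E r ⬝ᵥ η) ^ 2 = η ⬝ᵥ η := by
    simp only [sq]
    exact (hN.1.dotProduct_eq_sum_eigenvectorBasis η η).symm
  have hG : ∑ r, hN.1.eigenvalues r * (E r ⬝ᵥ η) ^ 2 = η ⬝ᵥ N *ᵥ η := by
    simp only [sq]
    exact (hN.1.dotProduct_mulVec_eq_sum_eigenvalues η η).symm
  set top : Finset (Fin d) := {r | hN.1.eigenvalues r = sortedEigs N ⟨0, hd⟩}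
  -- `ρ` is the weight of the top eigenvector `x` of `CᵀNC` off the top eigenspace of `N`.
  refine ⟨∑ r ∈ topᶜ, (E r ⬝ᵥ x) ^ 2, Finset.sum_nonneg fun r _ => sq_nonneg _, ?_⟩
  rw [← hxS, hquad, ← hH, ← hG]
  exact sum_mul_add_sq_le top hc (fun r hr => (Finset.mem_filter.mp hr).2)
    (fun r hr => hgap r fun h => hr (Finset.mem_filter.mpr ⟨Finset.mem_univ r, h⟩)) hγ
    (fun r => (hN.eigenvalues_pos r).le) (sortedEigs_pos_s14 hN _) hB hε

theorem exists_fratio_one_add_smul_vecMulVec_lt (hd : 1 ≤ d) {N : Matrix (Fin d) (Fin d) ℝ}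
    (hN : N.PosDef) {Hm : ℝ} (hHm : 0 < Hm) :
    ∃ ε₀ > 0, ∀ (η : Fin d → ℝ) (B ε : ℝ), 0 < ε → ε < ε₀ → η ⬝ᵥ η ≤ Hm →
      0 < η ⬝ᵥ N *ᵥ η →
      ∑ r with hN.1.eigenvalues r = sortedEigs N ⟨0, hd⟩,
        (⇑(hN.1.eigenvectorBasis r) ⬝ᵥ η) ^ 2 ≤ B →
      4 * B * N.trace ≤ η ⬝ᵥ N *ᵥ η →
      fratio hd N (1 + ε • vecMulVec η η) < fratio hd N 1 := by
  set lam := sortedEigs N ⟨0, hd⟩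
  have hlam : 0 < lam := sortedEigs_pos_s14 hN _
  have hT : 0 < N.trace := haveI : Nonempty (Fin d) := ⟨⟨0, hd⟩⟩; hN.trace_pos
  obtain ⟨γ, hγ, hgap⟩ : ∃ γ > 0, ∀ r, hN.1.eigenvalues r ≠ lam → hN.1.eigenvalues r ≤ lam - γ := by
    obtain ⟨γ, hγ, hle⟩ := exists_pos_forall_le_of_finite
      (fun r : {r // hN.1.eigenvalues r ≠ lam} => lam - hN.1.eigenvalues r)
      fun r => sub_pos.mpr ((eigenvalues_le_sortedEigs_zero_s14 hd hN.1 r).lt_of_ne r.2)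
    exact ⟨γ, hγ, fun r hr => by linarith [hle ⟨r, hr⟩]⟩
  refine ⟨min (γ / (4 * lam * Hm)) (lam / (2 * Hm * N.trace)), by positivity, ?_⟩
  intro η B ε hε hεlt hH hG hB hBG
  obtain ⟨ρ, hρ, hS⟩ := exists_sortedEigs_conj_le hd hN hγ.le hgap η hB hε.le
  have hgap_ε : 4 * ε * lam * (η ⬝ᵥ η) ≤ γ := by
    have := (lt_min_iff.mp hεlt).1
    rw [lt_div_iff₀ (by positivity)] at this
    nlinarith [mul_le_mul_of_nonneg_left hH (by positivity : 0 ≤ 4 * ε * lam)]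
  have htrace_ε : ε * (η ⬝ᵥ η) * N.trace ≤ lam / 2 := by
    have := (lt_min_iff.mp hεlt).2
    rw [lt_div_iff₀ (by positivity)] at this
    nlinarith [mul_le_mul_of_nonneg_left hH (by positivity : 0 ≤ ε * N.trace)]
  have htr := trace_one_add_smul_vecMulVec_mul_mul ε η N
  nth_rewrite 1 [← transpose_one_add_smul_vecMulVec] at htr
  have hH0 : 0 ≤ η ⬝ᵥ η := dotProduct_self_star_nonneg η
  have hquad_nonneg : 0 ≤ ε ^ 2 * (η ⬝ᵥ η) * (η ⬝ᵥ N *ᵥ η) := by positivity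
  rw [fratio_one, fratio, htr, div_lt_div_iff₀ (by nlinarith [mul_pos hε hG]) hT]
  nlinarith [mul_le_mul_of_nonneg_right hS hT.le, mul_nonneg (mul_nonneg hρ hT.le)
    (sub_nonneg.mpr hgap_ε), mul_le_mul_of_nonneg_left hBG (by positivity : 0 ≤ ε * lam),
    mul_le_mul_of_nonneg_left htrace_ε (by positivity : 0 ≤ ε * (η ⬝ᵥ N *ᵥ η)),
    mul_pos (mul_pos hε hlam) hG, mul_nonneg hlam.le hquad_nonneg]

theorem card_eigenvalues_eq_sortedEigs_lt (hd : 1 ≤ d) {N : Matrix (Fin d) (Fin d) ℝ}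
    (hN : N.PosDef) {k : ℕ} (hkd : k < d) (hTk : N.trace ≤ k * sortedEigs N ⟨0, hd⟩) :
    ({r | hN.1.eigenvalues r = sortedEigs N ⟨0, hd⟩} : Finset (Fin d)).card < k := by
  set lam := sortedEigs N ⟨0, hd⟩
  set top : Finset (Fin d) := {r | hN.1.eigenvalues r = lam}
  have hlam : 0 < lam := sortedEigs_pos_s14 hN _
  have htrace : N.trace = top.card * lam + ∑ r ∈ topᶜ, hN.1.eigenvalues r := by
    rw [hN.1.trace_eq_sum_eigenvalues_real, ← Finset.sum_add_sum_compl top,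
      Finset.sum_congr rfl fun r hr => (Finset.mem_filter.mp hr).2, Finset.sum_const,
      nsmul_eq_mul]
  rcases topᶜ.eq_empty_or_nonempty with hempty | hne
  · have hcard : top.card = d := by
      simpa using congrArg Finset.card (Finset.compl_eq_empty_iff top |>.mp hempty)
    rw [htrace, hempty, Finset.sum_empty, hcard, add_zero] at hTk
    have : (d : ℝ) ≤ k := le_of_mul_le_mul_right hTk hlam
    exact absurd (by exact_mod_cast this) (not_le.mpr hkd)
  · have hpos : 0 < ∑ r ∈ topᶜ, hN.1.eigenvalues r :=
      Finset.sum_pos (fun r _ => hN.eigenvalues_pos r) hne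
    have : (top.card : ℝ) * lam < k * lam := by linarith
    exact_mod_cast lt_of_mul_lt_mul_right this hlam.le

theorem exists_unit_orthogonal_top_eigenvectors (hd : 1 ≤ d) {ι : Type*} [Fintype ι]
    {N : ι → Matrix (Fin d) (Fin d) ℝ} (hN : ∀ i, (N i).PosDef) {k : ℕ} (hkd : k < d)
    (hTk : ∀ i, (N i).trace ≤ k * sortedEigs (N i) ⟨0, hd⟩)
    (hcard : Fintype.card ι * (k - 1) < d) (Q : (Fin d → ℝ) → Fin d → ℝ) :
    ∃ u₀, u₀ ⬝ᵥ u₀ = 1 ∧ ∀ i r, (hN i).1.eigenvalues r = sortedEigs (N i) ⟨0, hd⟩ →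
      Q ((hN i).1.eigenvectorBasis r) ⬝ᵥ u₀ = 0 := by
  set S := Finset.univ.sigma fun i =>
    ({r | (hN i).1.eigenvalues r = sortedEigs (N i) ⟨0, hd⟩} : Finset (Fin d))
  have hS : S.card < Fintype.card (Fin d) := by
    rw [Finset.card_sigma, Fintype.card_fin]
    calc _ ≤ ∑ _i : ι, (k - 1) := Finset.sum_le_sum fun i _ =>
          Nat.le_sub_one_of_lt (card_eigenvalues_eq_sortedEigs_lt hd (hN i) hkd (hTk i))
      _ < d := by simpa using hcard
  obtain ⟨u₀, hu₀, horth⟩ := exists_unit_forall_dotProduct_eq_zero S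
    (fun p => Q ((hN p.1).1.eigenvectorBasis p.2)) hS
  exact ⟨u₀, hu₀, fun i r hr => horth ⟨i, r⟩ (by simp [S, hr])⟩

theorem trace_transpose_mul_mul_mem_Icc (hd : 1 ≤ d) {A M : Matrix (Fin d) (Fin d) ℝ}
    (hA1 : sval A ⟨0, hd⟩ = 1) (hM : M.IsHermitian) {m L : ℝ} (hm : 0 ≤ m)
    (hML : ∀ r, m ≤ hM.eigenvalues r ∧ hM.eigenvalues r ≤ L) :
    (Aᵀ * M * A).trace ∈ Set.Icc m (d * L) := by
  have hL : 0 ≤ L := hm.trans ((hML ⟨0, hd⟩).1.trans (hML ⟨0, hd⟩).2)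
  constructor
  · have := le_trace_transpose_mul_mul A M
      (hM.le_dotProduct_mulVec_of_le_eigenvalues fun r => (hML r).1)
    nlinarith [one_le_trace_transpose_mul_self hd hA1]
  · have := trace_transpose_mul_mul_le A M
      (hM.dotProduct_mulVec_le_of_eigenvalues_le fun r => (hML r).2)
    nlinarith [trace_transpose_mul_self_le hd hA1]

theorem trace_le_mul_sortedEigs_of_inv_le_fratio (hd : 1 ≤ d) {M A : Matrix (Fin d) (Fin d) ℝ}
    (hN : (Aᵀ * M * A).PosDef) {k : ℝ} (hk : 0 < k) (h : 1 / k ≤ fratio hd M A) :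
    (Aᵀ * M * A).trace ≤ k * sortedEigs (Aᵀ * M * A) ⟨0, hd⟩ := by
  have : Nonempty (Fin d) := ⟨⟨0, hd⟩⟩
  rw [fratio, div_le_div_iff₀ hk hN.trace_pos] at h
  linarith

theorem sq_top_eigenvector_dotProduct_le (hd : 1 ≤ d) {A M : Matrix (Fin d) (Fin d) ℝ}
    (hA1 : sval A ⟨0, hd⟩ = 1) (hN : (Aᵀ * M * A).PosDef) {w : Matrix (Fin d) (Fin d) ℝ}
    {s : Fin d → ℝ} (hw : ∀ j, A *ᵥ w j = s j • w j) (hs : ∀ j, s j ≠ 0) (hW : w * wᵀ = 1)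
    {L : ℝ} (hM : ∀ x, M *ᵥ x ⬝ᵥ M *ᵥ x ≤ L ^ 2 * (x ⬝ᵥ x)) {r : Fin d}
    (hr : hN.1.eigenvalues r = sortedEigs (Aᵀ * M * A) ⟨0, hd⟩) {u u₀ : Fin d → ℝ}
    (horth : (fun j => (⇑(hN.1.eigenvectorBasis r) ⬝ᵥ w j) / s j) ⬝ᵥ u₀ = 0) :
    (⇑(hN.1.eigenvectorBasis r) ⬝ᵥ ∑ j, (u j / s j) • w j) ^ 2 ≤
      (L / sortedEigs (Aᵀ * M * A) ⟨0, hd⟩) ^ 2 * ((u - u₀) ⬝ᵥ (u - u₀)) := by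
  have he : (Aᵀ * M * A) *ᵥ hN.1.eigenvectorBasis r =
      sortedEigs (Aᵀ * M * A) ⟨0, hd⟩ • hN.1.eigenvectorBasis r := by
    rw [← hr]
    exact hN.1.mulVec_eigenvectorBasis r
  have hAe := (mulVec_dotProduct_mulVec_le_of_sval_zero_eq_one hd hA1
    (hN.1.eigenvectorBasis r)).trans_eq (hN.1.eigenvectorBasis_dotProduct_self r)
  exact (sq_dotProduct_sum_div_smul_le horth).trans <| mul_le_mul_of_nonneg_right
    (coords_div_dotProduct_self_le hW hw hs he (sortedEigs_pos_s14 hN _) hAe hM)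
    (dotProduct_self_star_nonneg _)

theorem exists_forall_fratio_mul_lt (hd : 1 ≤ d) {A M : Matrix (Fin d) (Fin d) ℝ}
    (hA : A.PosDef) (hA1 : sval A ⟨0, hd⟩ = 1) (hM : M.PosDef) (hN : (Aᵀ * M * A).PosDef)
    {w : Matrix (Fin d) (Fin d) ℝ} (hw : ∀ j, A *ᵥ w j = sortedEigs A j • w j)
    (hW : w * wᵀ = 1) {m L c₀ : ℝ} (hm : 0 < m)
    (hML : ∀ r, m ≤ hM.1.eigenvalues r ∧ hM.1.eigenvalues r ≤ L) {k : ℕ}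
    (hc₀ : c₀ ^ 2 ≤ 1 / 4) (hc₀m : 16 * d ^ 2 * (k * L / m) ^ 2 * L * c₀ ^ 2 ≤ m)
    (hTk : (Aᵀ * M * A).trace ≤ k * sortedEigs (Aᵀ * M * A) ⟨0, hd⟩)
    {u₀ : Fin d → ℝ} (hu₀ : u₀ ⬝ᵥ u₀ = 1)
    (horth : ∀ r, hN.1.eigenvalues r = sortedEigs (Aᵀ * M * A) ⟨0, hd⟩ →
      (fun j => (⇑(hN.1.eigenvectorBasis r) ⬝ᵥ w j) / sortedEigs A j) ⬝ᵥ u₀ = 0) :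
    ∃ ε₀ > (0 : ℝ), ∀ u, (u - u₀) ⬝ᵥ (u - u₀) < c₀ ^ 2 → ∀ ε, 0 < ε → ε < ε₀ →
      fratio hd M (A * (1 + ε • vecMulVec (∑ j, (u j / sortedEigs A j) • w j)
        (∑ j, (u j / sortedEigs A j) • w j))) < fratio hd M A := by
  set lam := sortedEigs (Aᵀ * M * A) ⟨0, hd⟩
  have hlam : 0 < lam := sortedEigs_pos_s14 hN _
  have hL : 0 < L := hm.trans_le ((hML ⟨0, hd⟩).1.trans (hML ⟨0, hd⟩).2)
  obtain ⟨hT_lb, hT_ub⟩ := trace_transpose_mul_mul_mem_Icc hd hA1 hM.1 hm.le hML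
  have hκ : L / lam ≤ k * L / m := by
    rw [div_le_div_iff₀ hlam hm]
    nlinarith
  have hs : ∀ j, 0 < sortedEigs A j := sortedEigs_pos_s14 hA
  obtain ⟨smin, hsmin, hsmin_le⟩ := exists_pos_forall_le_of_finite _ hs
  obtain ⟨ε₀, hε₀, hdecr⟩ :=
    exists_fratio_one_add_smul_vecMulVec_lt hd hN (Hm := 9 / 4 / smin ^ 2) (by positivity)
  refine ⟨ε₀, hε₀, fun u hu ε hε hεlt => ?_⟩
  obtain ⟨hu_lb, hu_ub⟩ := dotProduct_self_mem_Icc_of_near_unit hu₀ (hu.trans_le hc₀)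
  have hH := (sum_div_smul_dotProduct_self_le hW hsmin hsmin_le u).trans
    (div_le_div_of_nonneg_right hu_ub (by positivity))
  have hG := le_dotProduct_conj_mulVec_sum_div_smul hW hw (fun j => (hs j).ne')
    (hM.1.le_dotProduct_mulVec_of_le_eigenvalues fun r => (hML r).1) u
  have hMnorm := hM.1.mulVec_dotProduct_mulVec_le (fun r => (hM.eigenvalues_pos r).le)
    fun r => (hML r).2
  have hB : ∑ r with hN.1.eigenvalues r = lam,
      (⇑(hN.1.eigenvectorBasis r) ⬝ᵥ ∑ j, (u j / sortedEigs A j) • w j) ^ 2 ≤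
        d * ((k * L / m) ^ 2 * c₀ ^ 2) := by
    calc _ ≤ ∑ r with hN.1.eigenvalues r = lam, (k * L / m) ^ 2 * c₀ ^ 2 :=
          Finset.sum_le_sum fun r hr =>
            (sq_top_eigenvector_dotProduct_le hd hA1 hN hw (fun j => (hs j).ne') hW hMnorm
              (Finset.mem_filter.mp hr).2 (horth r (Finset.mem_filter.mp hr).2)).trans
            (mul_le_mul (pow_le_pow_left₀ (by positivity) hκ 2) hu.le
              (dotProduct_self_star_nonneg _) (sq_nonneg _))
      _ ≤ d * ((k * L / m) ^ 2 * c₀ ^ 2) := by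
          rw [Finset.sum_const, nsmul_eq_mul]
          gcongr
          simpa using Finset.card_le_univ (α := Fin d) _
  rw [fratio_mul, show fratio hd M A = fratio hd (Aᵀ * M * A) 1 by simpa using fratio_mul hd M A 1]
  refine hdecr _ _ ε hε hεlt hH (by nlinarith) hB ?_
  -- `hc₀m` says `4 B (d L) ≤ m / 4` for this `B`, while `m / 4 ≤ m |u|² ≤ ηᵀNη`.
  have hBT := mul_le_mul_of_nonneg_left hT_ub
    (by positivity : (0 : ℝ) ≤ 4 * (d * ((k * L / m) ^ 2 * c₀ ^ 2)))
  nlinarith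

end FinDim

/-- key proposition. Under the assumptions `k ≥ 2`, `d > k`,
`ℓ·(k−1) ≤ d−1`, with `M i` symmetric positive definite, there is a constant `c₀ ∈ (0,1)`
depending only on the `M i`, such that: for every `R ≥ 1`, every symmetric positive definite
minimizer `A` of `f = max_i fratio (M i)` over `𝒟_R` with `f(A) ≥ 1/k`, and every orthonormal
eigenbasis `w` of `A` with eigenvalues `s_j = sortedEigs A j`, there exist a (Euclidean) unit
vector `u₀` and `ε₀ > 0` so that every `u` with `|u − u₀| < c₀` satisfies `f_u(ε) < f_u(0)` for
all `ε ∈ (0, ε₀)`. Here `η(u) = Σ_j (u_j/s_j)·w_j`, `A_{η(u)}(ε) = A(Id + ε η(u)⊗η(u))`,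
`I = {i : fratio (M i) A = f(A)}` and `f_u(ε) = max_{i ∈ I} fratio (M i) (A_{η(u)}(ε))`. -/
theorem stmt14 (k d ℓ : ℕ) (hk : 2 ≤ k) (hdk : k < d) (hd : 1 ≤ d) (hℓ : 1 ≤ ℓ)
    (hℓk : ℓ * (k - 1) ≤ d - 1)
    (M : Fin ℓ → Matrix (Fin d) (Fin d) ℝ) (hM : ∀ i, (M i).PosDef) :
    ∃ c₀ : ℝ, 0 < c₀ ∧ c₀ < 1 ∧
      ∀ R : ℝ, 1 ≤ R →
      ∀ A : Matrix (Fin d) (Fin d) ℝ, A ∈ DR d hd R → A.PosDef →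
      (∀ B ∈ DR d hd R, (⨆ i, fratio hd (M i) A) ≤ ⨆ i, fratio hd (M i) B) →
      (⨆ i, fratio hd (M i) A) ≥ 1 / (k : ℝ) →
      ∀ w : Fin d → Fin d → ℝ,
      (∀ j : Fin d, A.mulVec (w j) = sortedEigs A j • w j) →
      (∀ i j : Fin d, w i ⬝ᵥ w j = if i = j then 1 else 0) →
      ∃ u₀ : Fin d → ℝ, u₀ ⬝ᵥ u₀ = 1 ∧
        ∃ ε₀ > (0 : ℝ), ∀ u : Fin d → ℝ, (u - u₀) ⬝ᵥ (u - u₀) < c₀ ^ 2 →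
          ∀ ε : ℝ, 0 < ε → ε < ε₀ →
            (⨆ i : {i : Fin ℓ // fratio hd (M i) A = ⨆ i', fratio hd (M i') A},
                fratio hd (M i.1)
                  (A * (1 + ε • vecMulVec (∑ j, (u j / sortedEigs A j) • w j)
                    (∑ j, (u j / sortedEigs A j) • w j))))
              < ⨆ i : {i : Fin ℓ // fratio hd (M i) A = ⨆ i', fratio hd (M i') A},
                  fratio hd (M i.1) A := by
  obtain ⟨m, hm, L, hL, hML⟩ := exists_uniform_eigenvalue_bounds hM
  obtain ⟨c₀, hc₀, hc₀half, hc₀m⟩ :=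
    exists_pos_le_half_mul_sq_le (by positivity : 0 ≤ 16 * (d : ℝ) ^ 2 * (k * L / m) ^ 2 * L) hm
  refine ⟨c₀, hc₀, by linarith, fun R _ A hADR hA _ hfk w hw hworth => ?_⟩
  set active : Fin ℓ → Prop := fun i => fratio hd (M i) A = ⨆ i', fratio hd (M i') A
  have hN i := posDef_transpose_mul_mul (hM i) hA.isUnit
  have hTk (i : Subtype active) :=
    trace_le_mul_sortedEigs_of_inv_le_fratio hd (hN i) (by positivity) (i.2 ▸ hfk)
  obtain ⟨u₀, hu₀, horth⟩ := exists_unit_orthogonal_top_eigenvectors hd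
    (N := fun i : Subtype active => Aᵀ * M i * A) (fun i => hN i) hdk hTk
    ((Nat.mul_le_mul_right (k - 1) (by simpa using Fintype.card_subtype_le active)).trans_lt
      (hℓk.trans_lt (by omega)))
    fun e j => (e ⬝ᵥ w j) / sortedEigs A j
  choose ε hε hdecr using fun i : Subtype active =>
    exists_forall_fratio_mul_lt hd hA hADR.2.1 (hM i) (hN i) hw
      (mul_transpose_eq_one_iff.mpr hworth) hm (hML i) (by nlinarith) hc₀m (hTk i) hu₀
      (horth i)
  obtain ⟨ε₀, hε₀, hε₀le⟩ := exists_pos_forall_le_of_finite ε hε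
  refine ⟨u₀, hu₀, ε₀, hε₀, fun u hu ε' hε' hε'lt => ?_⟩
  have : Nonempty (Fin ℓ) := ⟨⟨0, hℓ⟩⟩
  obtain ⟨i₀, hi₀⟩ := exists_eq_ciSup_of_finite (f := fun i => fratio hd (M i) A)
  have : Nonempty (Subtype active) := ⟨⟨i₀, hi₀⟩⟩
  exact ciSup_lt_ciSup_of_forall_lt fun i => hdecr i u hu ε' hε' (hε'lt.trans_le (hε₀le i))
end

section
/- Let D be a d × d real diagonal matrix with diagonal entries λ₁, …, λ_d and let ξ ∈ ℝᵈ. For ε ∈ ℝ and λ ∈ ℝ define F(λ, ε) = det( (Id + ε ξ⊗ξ)ᵀ D (Id + ε ξ⊗ξ) − λ·Id ). Then F(λ, ε) = ∏_{i=1}^{d} ( λ_i + 2ε λ_i ⟨ξ, e_i⟩² − λ ) + O(ε²) as ε → 0, uniformly for λ in any compact subset of ℝ; here e₁, …, e_d is the standard basis of ℝᵈ. -/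
/-!
Over any commutative ring, with `A = ξ ⊗ ξ`, the matrix `(1 + xA)ᵀ D (1 + xA) - l` equals
`D - l + x (AD + DA) + x² ADA`: its off-diagonal entries are divisible by `x` and its diagonal
entries agree with `Dᵢ + 2x Dᵢ ξᵢ² - l` modulo `x²`. Every non-identity permutation in the
Leibniz expansion uses at least two off-diagonal entries, so the determinant agrees with that
product modulo `x²`. Taking the ring `C(ℝ × ℝ, ℝ)`, `x = ε` and `l = λ` makes the quotient a
continuous function of `(λ, ε)`, hence bounded on `K × [-1, 1]`.
-/

open Matrix

theorem Finset.dvd_prod_sub_prod {ι R : Type*} [CommRing R] (s : Finset ι) {x : R} {f g : ι → R}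
    (h : ∀ i ∈ s, x ∣ f i - g i) : x ∣ ∏ i ∈ s, f i - ∏ i ∈ s, g i := by
  rw [← Ideal.mem_span_singleton, ← Ideal.Quotient.mk_eq_mk_iff_sub_mem, map_prod, map_prod]
  exact Finset.prod_congr rfl fun i hi =>
    (Ideal.Quotient.mk_eq_mk_iff_sub_mem _ _).2 (Ideal.mem_span_singleton.2 (h i hi))

section PerturbedDeterminant

variable {n R : Type*} [Fintype n] [DecidableEq n] [CommRing R]

theorem Matrix.sq_dvd_det_sub_prod_diag {M : Matrix n n R} {x : R}
    (h : ∀ i j, i ≠ j → x ∣ M i j) : x ^ 2 ∣ M.det - ∏ i, M i i := by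
  rw [det_apply, ← Finset.sum_erase_add _ _ (Finset.mem_univ 1)]
  simp only [Equiv.Perm.sign_one, one_smul, Equiv.Perm.one_apply, add_sub_cancel_right]
  refine Finset.dvd_sum fun σ hσ => ?_
  obtain ⟨i, hi⟩ : ∃ i, σ i ≠ i :=
    not_forall.mp fun h => Finset.ne_of_mem_erase hσ (Equiv.ext h)
  have hσi : σ (σ i) ≠ σ i := fun h' => hi (σ.injective h')
  have hpair : x ^ 2 ∣ ∏ k ∈ {i, σ i}, M (σ k) k := by
    rw [Finset.prod_pair hi.symm, sq]
    exact mul_dvd_mul (h _ _ hi) (h _ _ hσi)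
  rw [Units.smul_def, zsmul_eq_mul]
  exact (hpair.trans (Finset.prod_dvd_prod_of_subset _ _ _ (Finset.subset_univ _))).mul_left _

theorem Matrix.sq_dvd_det_perturbed_sub_prod (x l : R) (D ξ : n → R) :
    x ^ 2 ∣ det ((1 + x • vecMulVec ξ ξ)ᵀ * diagonal D * (1 + x • vecMulVec ξ ξ) - l • 1)
      - ∏ i, (D i + 2 * x * D i * ξ i ^ 2 - l) := by
  set A := vecMulVec ξ ξ
  set N := (1 + x • A)ᵀ * diagonal D * (1 + x • A) - l • 1
  have hexpand : N = (diagonal D - l • 1) + x • (A * diagonal D + diagonal D * A)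
      + x ^ 2 • (A * diagonal D * A) := by
    have hA : Aᵀ = A := transpose_vecMulVec ξ ξ
    simp only [N, transpose_add, transpose_smul, transpose_one, hA, Matrix.add_mul, Matrix.mul_add,
      Matrix.smul_mul, Matrix.mul_smul, Matrix.one_mul, Matrix.mul_one]
    module
  have hN : ∀ i j, N i j = (diagonal D - l • 1) i j + x * (ξ i * ξ j * (D i + D j))
      + x ^ 2 * (A * diagonal D * A) i j := by
    intro i j
    simp only [hexpand, add_apply, smul_apply, smul_eq_mul, mul_diagonal, diagonal_mul, A,
      vecMulVec_apply]
    ring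
  have hoff : ∀ i j, i ≠ j → x ∣ N i j := fun i j hij => by
    rw [hN, sub_apply, diagonal_apply_ne _ hij, smul_apply, one_apply_ne hij, smul_zero, sub_zero,
      zero_add]
    exact dvd_add (dvd_mul_right _ _) ((dvd_pow_self x two_ne_zero).mul_right _)
  have hdiag : ∀ i ∈ Finset.univ, x ^ 2 ∣ N i i - (D i + 2 * x * D i * ξ i ^ 2 - l) :=
    fun i _ => by
      rw [hN, sub_apply, diagonal_apply_eq, smul_apply, one_apply_eq, smul_eq_mul, mul_one]
      exact ⟨(A * diagonal D * A) i i, by ring⟩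
  have := dvd_add (sq_dvd_det_sub_prod_diag hoff) (Finset.dvd_prod_sub_prod _ hdiag)
  rwa [sub_add_sub_cancel] at this

theorem RingHom.map_det_perturbed {S : Type*} [CommRing S] (f : R →+* S) (x l : R)
    (D ξ : n → R) :
    f (det ((1 + x • vecMulVec ξ ξ)ᵀ * diagonal D * (1 + x • vecMulVec ξ ξ) - l • 1)) =
      det ((1 + f x • vecMulVec (f ∘ ξ) (f ∘ ξ))ᵀ * diagonal (f ∘ D)
        * (1 + f x • vecMulVec (f ∘ ξ) (f ∘ ξ)) - f l • 1) := by
  have hξ : (vecMulVec ξ ξ).map f = vecMulVec (f ∘ ξ) (f ∘ ξ) := by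
    ext
    simp [vecMulVec_apply]
  rw [RingHom.map_det]
  congr 1
  simp [RingHom.mapMatrix_apply, Matrix.map_sub, Matrix.map_add, Matrix.map_mul, Matrix.map_smul',
    hξ, Function.comp_def]

end PerturbedDeterminant

theorem exists_continuous_det_perturbed_sub_prod_eq {n : Type*} [Fintype n] [DecidableEq n]
    (Λ ξ : n → ℝ) : ∃ Q : C(ℝ × ℝ, ℝ), ∀ lam ε : ℝ,
      det ((1 + ε • vecMulVec ξ ξ)ᵀ * diagonal Λ * (1 + ε • vecMulVec ξ ξ) - lam • 1)
        - ∏ i, (Λ i + 2 * ε * Λ i * ξ i ^ 2 - lam) = ε ^ 2 * Q (lam, ε) := by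
  obtain ⟨Q, hQ⟩ := sq_dvd_det_perturbed_sub_prod ContinuousMap.snd ContinuousMap.fst
    (fun i => ContinuousMap.const (ℝ × ℝ) (Λ i)) (fun i => ContinuousMap.const (ℝ × ℝ) (ξ i))
  refine ⟨Q, fun lam ε => ?_⟩
  have := congrArg (ContinuousMap.evalAlgHom ℝ ℝ (lam, ε)).toRingHom hQ
  rw [map_sub, RingHom.map_det_perturbed, map_prod] at this
  simp only [map_sub, map_add, map_mul, map_pow, map_ofNat] at this
  simpa [Function.comp_def] using this

/-- determinant expansion. For a diagonal matrix `D = diagonal Λ` and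
`ξ ∈ ℝᵈ`, let `F(lam, ε) = det((Id + ε ξ⊗ξ)ᵀ D (Id + ε ξ⊗ξ) − lam·Id)`. Then, uniformly for
`lam` in any compact subset `K ⊆ ℝ`,
`F(lam, ε) = Π_i (Λ_i + 2ε Λ_i ξ_i² − lam) + O(ε²)` as `ε → 0`. -/
theorem stmt19 (d : ℕ) (Λ : Fin d → ℝ) (ξ : Fin d → ℝ)
    (K : Set ℝ) (hK : IsCompact K) :
    ∃ C > (0 : ℝ), ∃ ε₀ > (0 : ℝ), ∀ lam ∈ K, ∀ ε : ℝ, |ε| ≤ ε₀ →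
      |Matrix.det
          ((1 + ε • vecMulVec ξ ξ)ᵀ * Matrix.diagonal Λ * (1 + ε • vecMulVec ξ ξ)
            - lam • (1 : Matrix (Fin d) (Fin d) ℝ))
        - ∏ i, (Λ i + 2 * ε * Λ i * (ξ i) ^ 2 - lam)| ≤ C * ε ^ 2 := by
  obtain ⟨Q, hQ⟩ := exists_continuous_det_perturbed_sub_prod_eq Λ ξ
  obtain ⟨C, hC⟩ := (hK.prod (isCompact_closedBall (0 : ℝ) 1)).exists_bound_of_continuousOn
    Q.continuous.continuousOn
  refine ⟨max C 1, by positivity, 1, one_pos, fun lam hlam ε hε => ?_⟩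
  have hQle : |Q (lam, ε)| ≤ max C 1 :=
    (hC (lam, ε) ⟨hlam, by simpa using hε⟩).trans (le_max_left _ _)
  rw [hQ, abs_mul, abs_of_nonneg (sq_nonneg ε), mul_comm]
  exact mul_le_mul_of_nonneg_right hQle (sq_nonneg ε)
end
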